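/- arXiv:1707.07475 — 6 statements merged into one kernel-verified Lean document; each statement's English description precedes it below -/
import Mathlib

section
/- Let X be a metric space, let φ be a lower semicontinuous submeasure on ℕ such that I_φ is an ideal on ℕ, let x = (x_n) be a sequence in X, and let q > 0 be a real number. Then the set Λ_x(I_φ, q) := {ℓ ∈ X : there exists A ⊆ ℕ with ‖A‖_φ ≥ q such that the subsequence (x_n : n ∈ A) converges to ℓ} is closed in X. -/
open Filter Topology MeasureTheory Set

noncomputable section

/-- A lower semicontinuous submeasure on `ℕ`:  `φ : P(ℕ) → [0,∞]` with `φ(∅) = 0`,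
`φ({n}) < ∞`, monotone, subadditive, and `φ(A) = lim_n φ(A ∩ {0,…,n-1})`. -/
structure LSCSubmeasure where
  toFun : Set ℕ → ENNReal
  empty' : toFun ∅ = 0
  singleton_lt_top' : ∀ n : ℕ, toFun {n} < ⊤
  mono' : ∀ ⦃A B : Set ℕ⦄, A ⊆ B → toFun A ≤ toFun B
  subadd' : ∀ A B : Set ℕ, toFun (A ∪ B) ≤ toFun A + toFun B
  lsc' : ∀ A : Set ℕ, Tendsto (fun n => toFun (A ∩ {m | m < n})) atTop (𝓝 (toFun A))

/-- `‖A‖_φ := lim_n φ(A \ {0,…,n-1})`; since the sequence is antitone, the limit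
is the infimum. -/
def LSCSubmeasure.norm (φ : LSCSubmeasure) (A : Set ℕ) : ENNReal :=
  ⨅ n : ℕ, φ.toFun (A \ {m | m < n})

/-- The (analytic P-)ideal `I_φ = {A : ‖A‖_φ = 0}` associated with `φ`. -/
def LSCSubmeasure.ideal (φ : LSCSubmeasure) : Set (Set ℕ) :=
  {A | φ.norm A = 0}

/-- `I` is an ideal on `ℕ`: closed under finite unions and subsets, contains all
finite sets, and is proper. -/
def IsIdealOnNat (I : Set (Set ℕ)) : Prop :=
  (∀ A B : Set ℕ, A ∈ I → B ∈ I → A ∪ B ∈ I) ∧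
  (∀ A B : Set ℕ, A ⊆ B → B ∈ I → A ∈ I) ∧
  (∀ A : Set ℕ, A.Finite → A ∈ I) ∧
  (Set.univ : Set ℕ) ∉ I

/-- Convergence of the subsequence `(x_n : n ∈ A)` to `l`. -/
def ConvergesAlong {X : Type*} [TopologicalSpace X] (x : ℕ → X) (A : Set ℕ) (l : X) : Prop :=
  Tendsto x (atTop ⊓ 𝓟 A) (𝓝 l)

/-- `Λ_x(I)`: the set of `I`-limit points of the sequence `x`. -/
def idealLimitPoints {X : Type*} [TopologicalSpace X] (I : Set (Set ℕ)) (x : ℕ → X) : Set X :=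
  {l | ∃ A : Set ℕ, A ∉ I ∧ ConvergesAlong x A l}

/-- `Γ_x(I)`: the set of `I`-cluster points of the sequence `x`. -/
def idealClusterPoints {X : Type*} [TopologicalSpace X] (I : Set (Set ℕ)) (x : ℕ → X) : Set X :=
  {l | ∀ U ∈ 𝓝 l, {n | x n ∈ U} ∉ I}

/-- `Λ_x(I_φ, q)`: the set of `ℓ` such that some subsequence `(x_n : n ∈ A)` with
`‖A‖_φ ≥ q` converges to `ℓ`. -/
def LambdaQ {X : Type*} [TopologicalSpace X] (φ : LSCSubmeasure) (x : ℕ → X) (q : ℝ) : Set X :=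
  {l | ∃ A : Set ℕ, ENNReal.ofReal q ≤ φ.norm A ∧ ConvergesAlong x A l}

/-- The summable ideal `I_f = {S : ∑_{n ∈ S} f(n) < ∞}`. -/
def summableIdeal (f : ℕ → ℝ) : Set (Set ℕ) := {S | Summable (S.indicator f)}

/-- `A` has asymptotic density `d`. -/
def HasDensity (A : Set ℕ) (d : ℝ) : Prop :=
  Tendsto (fun n => (∑ i ∈ Finset.range n, A.indicator (fun _ => (1 : ℝ)) i) / (n : ℝ))
    atTop (𝓝 d)

/-- `A_B := {a_b : b ∈ B}`, where `a_0 < a_1 < ⋯` is the increasing enumeration of `A`. -/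
def sel (A B : Set ℕ) : Set ℕ := (fun b => Nat.nth (· ∈ A) b) '' B

/-- `A ≤ B`: the increasing enumerations satisfy `a_n ≤ b_n` for all `n`. -/
def enumLE (A B : Set ℕ) : Prop := ∀ n : ℕ, Nat.nth (· ∈ A) n ≤ Nat.nth (· ∈ B) n

/-- `I` is weakly thinnable: `A_B ∉ I` whenever `A` has non-zero asymptotic density
and `B ∉ I`. -/
def WeaklyThinnable (I : Set (Set ℕ)) : Prop :=
  ∀ A B : Set ℕ, (∃ d : ℝ, 0 < d ∧ HasDensity A d) → B ∉ I → sel A B ∉ I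

/-- `I` is thinnable: weakly thinnable, and moreover `B_A ∉ I` under the same
hypotheses, and `X ∉ I` whenever `X ≤ Y` and `Y ∉ I`. -/
def Thinnable (I : Set (Set ℕ)) : Prop :=
  WeaklyThinnable I ∧
  (∀ A B : Set ℕ, (∃ d : ℝ, 0 < d ∧ HasDensity A d) → B ∉ I → sel B A ∉ I) ∧
  (∀ X Y : Set ℕ, enumLE X Y → Y ∉ I → X ∉ I)

/-- The analytic P-ideal `I_φ` is strongly thinnable. -/
def StronglyThinnable (φ : LSCSubmeasure) : Prop :=
  WeaklyThinnable φ.ideal ∧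
  (∀ q : ℝ, 0 < q → ∀ A : Set ℕ, ∀ a : ℝ, 0 < a → HasDensity A a →
    ∃ c : ℝ, 0 < c ∧ ∀ B : Set ℕ, ENNReal.ofReal q ≤ φ.norm B →
      ENNReal.ofReal (c * q) ≤ φ.norm (sel B A)) ∧
  (∃ c : ℝ, 0 < c ∧ ∀ X Y : Set ℕ, enumLE X Y →
    ENNReal.ofReal c * φ.norm Y ≤ φ.norm X)

/-- The `i`-th digit (0-indexed, so this is `d_{i+1}(ω)`) of the non-terminating
dyadic expansion of `ω ∈ (0,1]`. -/
def dyadicDigit (ω : ℝ) (i : ℕ) : ℕ :=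
  (⌈(2 : ℝ) ^ (i + 1) * ω⌉ - 2 * ⌈(2 : ℝ) ^ i * ω⌉ + 1).toNat

/-- `x↾ω`: the subsequence of `x` indexed by the set `{i : d_i(ω) = 1}`. -/
def subseq {X : Type*} (x : ℕ → X) (ω : ℝ) : ℕ → X :=
  fun k => x (Nat.nth (fun i => dyadicDigit ω i = 1) k)

/-- The Erdős–Ulam ideal `E_f` associated with a weight `f`. -/
def ErdosUlamIdeal (f : ℕ → ℝ) : Set (Set ℕ) :=
  {S | Tendsto (fun n => (∑ i ∈ Finset.Icc 1 n, S.indicator f i) /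
        (∑ i ∈ Finset.Icc 1 n, f i)) atTop (𝓝 0)}

/-- The upper `α`-density `d_α^⋆(S)`. -/
def upperAlphaDensity (α : ℝ) (S : Set ℕ) : ℝ :=
  limsup (fun n => (∑ i ∈ Finset.Icc 1 n, S.indicator (fun i => (i : ℝ) ^ α) i) /
    (∑ i ∈ Finset.Icc 1 n, (i : ℝ) ^ α)) atTop

/-- `S` has `α`-asymptotic density `d`. -/
def HasAlphaDensity (α : ℝ) (S : Set ℕ) (d : ℝ) : Prop :=
  Tendsto (fun n => (∑ i ∈ Finset.Icc 1 n, S.indicator (fun i => (i : ℝ) ^ α) i) /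
    (∑ i ∈ Finset.Icc 1 n, (i : ℝ) ^ α)) atTop (𝓝 d)

/-- The ideal `I_α` of sets of zero upper `α`-density. -/
def Ialpha (α : ℝ) : Set (Set ℕ) := {S | upperAlphaDensity α S = 0}


/-!
Let `ℓ` be in the closure of `Λ_x(I_φ, q)` and let `U₀ ⊇ U₁ ⊇ ⋯` be a neighbourhood basis at `ℓ`.
Each `U_k` contains some `ℓ_k ∈ Λ_x(I_φ, q)`, so `B_k := {n : x_n ∈ U_k}` satisfies `‖B_k‖_φ ≥ q`.
By lower semicontinuity, each tail of `B_k` contains a finite block of submeasure nearly `q`;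
choosing these blocks one after another gives a set `S` with `‖S‖_φ ≥ q` whose tail beyond the
`k`-th block lies in `B_k ∪ B_{k+1} ∪ ⋯ ⊆ {n : x_n ∈ U_k}`, so `(x_n : n ∈ S)` converges to `ℓ`.
-/

open scoped ENNReal

namespace LSCSubmeasure

variable (φ : LSCSubmeasure)

theorem norm_le_toFun_diff_Iio (A : Set ℕ) (n : ℕ) : φ.norm A ≤ φ.toFun (A \ Iio n) :=
  iInf_le (fun n => φ.toFun (A \ {m | m < n})) n

theorem norm_le_norm_of_eventually_mem {A B : Set ℕ} (h : ∀ᶠ n in atTop ⊓ 𝓟 A, n ∈ B) :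
    φ.norm A ≤ φ.norm B := by
  obtain ⟨N, hN⟩ := eventually_atTop.1 (eventually_inf_principal.1 h)
  refine le_iInf fun n => (φ.norm_le_toFun_diff_Iio A (max N n)).trans (φ.mono' ?_)
  rintro i ⟨hiA, hiN⟩
  simp only [mem_Iio, not_lt, max_le_iff] at hiN
  exact ⟨hN i hiN.1 hiA, not_lt.2 hiN.2⟩

theorem le_norm_iUnion_of_tendsto {S : ℕ → Set ℕ} {p : ℕ → ℕ} (hp : Tendsto p atTop atTop)
    (hS : ∀ k, S k ⊆ Ici (p k)) {u : ℕ → ℝ≥0∞} {r : ℝ≥0∞} (hu : Tendsto u atTop (𝓝 r))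
    (huS : ∀ k, u k ≤ φ.toFun (S k)) : r ≤ φ.norm (⋃ k, S k) :=
  le_iInf fun N => le_of_tendsto hu <| (hp.eventually_ge_atTop N).mono fun k hk =>
    (huS k).trans <| φ.mono' <| show S k ⊆ (⋃ k, S k) \ Iio N from
      fun _ hi => ⟨mem_iUnion.2 ⟨k, hi⟩, not_lt.2 (hk.trans (hS k hi))⟩

theorem exists_diagonal_le_norm (B : ℕ → Set ℕ) {r : ℝ≥0∞} (hB : ∀ k, r ≤ φ.norm (B k)) :
    ∃ S, r ≤ φ.norm S ∧ ∀ K, ∀ᶠ n in atTop ⊓ 𝓟 S, ∃ k ≥ K, n ∈ B k := by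
  rcases eq_zero_or_pos r with rfl | hr
  · exact ⟨∅, zero_le, fun K => by simp⟩
  obtain ⟨u, -, hu_lt, hu⟩ := exists_seq_strictMono_tendsto' hr
  have hblock : ∀ k n, ∃ m, u k < φ.toFun ((B k \ Iio n) ∩ Iio m) := fun k n =>
    ((φ.lsc' _).eventually <| lt_mem_nhds <|
      (hu_lt k).2.trans_le ((hB k).trans (φ.norm_le_toFun_diff_Iio _ n))).exists
  choose m hm using hblock
  let p : ℕ → ℕ := fun k => Nat.rec 0 (fun k pk => max (m k pk) (pk + 1)) k
  have hp : StrictMono p :=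
    strictMono_nat_of_lt_succ fun k => (Nat.lt_succ_self _).trans_le (le_max_right _ _)
  let S : ℕ → Set ℕ := fun k => B k ∩ Ico (p k) (p (k + 1))
  refine ⟨⋃ k, S k, φ.le_norm_iUnion_of_tendsto hp.tendsto_atTop
    (fun k i hi => hi.2.1) hu fun k => (hm k (p k)).le.trans (φ.mono' ?_), fun K => ?_⟩
  · rintro i ⟨⟨hiB, hip⟩, him⟩
    exact ⟨hiB, not_lt.1 hip, him.trans_le (le_max_left _ _)⟩
  · refine eventually_inf_principal.2 ((eventually_ge_atTop (p K)).mono fun i hi hiS => ?_)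
    obtain ⟨k, hiB, -, hik⟩ := mem_iUnion.1 hiS
    exact ⟨k, Nat.lt_succ_iff.1 (hp.lt_iff_lt.1 (hi.trans_lt hik)), hiB⟩

end LSCSubmeasure

theorem isClosed_lambdaQ {X : Type*} [TopologicalSpace X] [FirstCountableTopology X]
    (φ : LSCSubmeasure) (x : ℕ → X) (q : ℝ) : IsClosed (LambdaQ φ x q) := by
  refine isClosed_of_closure_subset fun l hl => ?_
  obtain ⟨U, hU⟩ := (𝓝 l).exists_antitone_basis
  have hB : ∀ k, ENNReal.ofReal q ≤ φ.norm (x ⁻¹' U k) := fun k => by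
    obtain ⟨L, hLU, A, hAq, hA⟩ := mem_closure_iff_nhds.1 hl _ (interior_mem_nhds.2 (hU.mem k))
    exact hAq.trans <| φ.norm_le_norm_of_eventually_mem <|
      (hA.eventually (isOpen_interior.mem_nhds hLU)).mono fun _ hn =>
        interior_subset (s := U k) hn
  obtain ⟨S, hSq, hS⟩ := φ.exists_diagonal_le_norm _ hB
  exact ⟨S, hSq, hU.1.tendsto_right_iff.2 fun K _ =>
    (hS K).mono fun n ⟨k, hKk, hn⟩ => hU.antitone hKk hn⟩

theorem stmt0_general {X : Type*} [MetricSpace X] (φ : LSCSubmeasure)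
    (x : ℕ → X) (q : ℝ) :
    IsClosed (LambdaQ φ x q) :=
  isClosed_lambdaQ φ x q

/-- For a metric space `X`, a lower semicontinuous submeasure `φ` on `ℕ`
whose associated family `I_φ` is an ideal, a sequence `x` in `X` and `q > 0`, the set
`Λ_x(I_φ, q)` is closed. -/
theorem stmt0 {X : Type*} [MetricSpace X] (φ : LSCSubmeasure)
    (hI : IsIdealOnNat φ.ideal) (x : ℕ → X) (q : ℝ) (hq : 0 < q) :
    IsClosed (LambdaQ φ x q) :=
  stmt0_general φ x q
end
end

section
/- Let X be a metric space, let x = (x_n) be a sequence in X, let f : ℕ → [0,∞) be a function with ∑_{n≥1} f(n) = ∞, and let I_f := {S ⊆ ℕ : ∑_{n ∈ S} f(n) < ∞} be the summable ideal generated by f. Then the set Λ_x(I_f) of I_f-limit points of x is closed in X. -/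
open Filter Topology MeasureTheory Set

noncomputable section

lemma exists_block (f : ℕ → ℝ) (hf : ∀ n, 0 ≤ f n) (S : Set ℕ)
    (hS : ¬ Summable (S.indicator f)) (N : ℕ) :
    ∃ B : Finset ℕ, B.Nonempty ∧ (∀ n ∈ B, n ∈ S ∧ N ≤ n) ∧ 1 ≤ ∑ n ∈ B, f n := by
  classical
  set T : Set ℕ := S ∩ {n | N ≤ n} with hTdef
  have hT : ¬ Summable (T.indicator f) := by
    intro h
    apply hS
    have h2 : Summable ((S ∩ {n | n < N}).indicator f) := by
      apply summable_of_ne_finset_zero (s := Finset.range N)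
      intro n hn
      simp only [Finset.mem_range, not_lt] at hn
      simp [Set.indicator_apply, Nat.not_lt.2 hn]
    have := h.add h2
    convert this using 1
    funext n
    by_cases h1 : n ∈ S
    · by_cases h2 : N ≤ n <;>
        simp [Set.indicator_apply, h1, h2, hTdef, Nat.lt_of_not_le, Nat.not_le.2, Nat.not_lt.2]
    · simp [Set.indicator_apply, h1, hTdef]
  have hnn : ∀ n, 0 ≤ T.indicator f n := fun n => Set.indicator_nonneg (fun i _ => hf i) n
  have htend : Tendsto (fun m => ∑ i ∈ Finset.range m, T.indicator f i) atTop atTop := by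
    rwa [← not_summable_iff_tendsto_nat_atTop_of_nonneg hnn]
  obtain ⟨m, hm⟩ := (htend.eventually_ge_atTop 1).exists
  refine ⟨(Finset.range m).filter (· ∈ T), ?_, ?_, ?_⟩
  · rcases Finset.eq_empty_or_nonempty ((Finset.range m).filter (· ∈ T)) with he | hne
    · exfalso
      have : ∑ i ∈ Finset.range m, T.indicator f i = 0 := by
        rw [Finset.sum_indicator_eq_sum_filter, he]; simp
      linarith
    · exact hne
  · intro n hn
    simp only [Finset.mem_filter, Finset.mem_range] at hn
    exact ⟨hn.2.1, hn.2.2⟩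
  · rw [← Finset.sum_indicator_eq_sum_filter]
    exact hm


/-- For a sequence `x` in a metric space and a summable ideal `I_f`
(where `f ≥ 0` is not summable), the set `Λ_x(I_f)` of `I_f`-limit points is closed. -/
theorem stmt2 {X : Type*} [MetricSpace X] (x : ℕ → X) (f : ℕ → ℝ)
    (hf : ∀ n, 0 ≤ f n) (hdiv : ¬ Summable f) :
    IsClosed (idealLimitPoints (summableIdeal f) x) := by
  classical
  rw [← closure_subset_iff_isClosed]
  intro l hl
  -- approximating limit points
  have happ : ∀ k : ℕ, ∃ (L : X) (A : Set ℕ), A ∉ summableIdeal f ∧ ConvergesAlong x A L ∧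
      dist l L < 1 / (k + 1) := by
    intro k
    obtain ⟨y, hy, hdy⟩ := Metric.mem_closure_iff.1 hl (1 / (k + 1)) (by positivity)
    obtain ⟨A, hA, hconv⟩ := hy
    exact ⟨y, A, hA, hconv, hdy⟩
  choose L A hA hconv hdist using happ
  -- tail control
  have htail : ∀ k : ℕ, ∃ M : ℕ, ∀ n ≥ M, n ∈ A k → dist (x n) (L k) < 1 / (k + 1) := by
    intro k
    have := Metric.tendsto_nhds.1 (hconv k) (1 / (k + 1)) (by positivity)
    rw [eventually_inf_principal] at this
    exact eventually_atTop.1 this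
  choose M hM using htail
  -- block extraction
  have hblk : ∀ (k N : ℕ), ∃ B : Finset ℕ, B.Nonempty ∧
      (∀ n ∈ B, n ∈ A k ∧ max N (M k) ≤ n) ∧ 1 ≤ ∑ n ∈ B, f n :=
    fun k N => exists_block f hf (A k) (hA k) (max N (M k))
  choose blk hblk1 hblk2 hblk3 using hblk
  -- recursive thresholds
  let Nf : ℕ → ℕ := fun k => Nat.rec 0 (fun j N => (blk j N).sup id + 1) k
  have hNf0 : Nf 0 = 0 := rfl
  have hNfs : ∀ k, Nf (k + 1) = (blk k (Nf k)).sup id + 1 := fun k => rfl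
  set B : ℕ → Finset ℕ := fun k => blk k (Nf k) with hB
  have hBlb : ∀ k, ∀ n ∈ B k, Nf k ≤ n := fun k n hn =>
    le_trans (le_max_left _ _) (hblk2 k (Nf k) n hn).2
  have hBub : ∀ k, ∀ n ∈ B k, n < Nf (k + 1) := by
    intro k n hn
    rw [hNfs]
    exact Nat.lt_succ_of_le (Finset.le_sup (f := id) hn)
  have hNmono : StrictMono Nf := by
    apply strictMono_nat_of_lt_succ
    intro k
    obtain ⟨n, hn⟩ := hblk1 k (Nf k)
    exact lt_of_le_of_lt (hBlb k n hn) (hBub k n hn)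
  have hBA : ∀ k, ∀ n ∈ B k, n ∈ A k := fun k n hn => (hblk2 k (Nf k) n hn).1
  have hBd : ∀ k, ∀ n ∈ B k, dist (x n) (L k) < 1 / (k + 1) := by
    intro k n hn
    exact hM k n (le_trans (le_max_right _ _) (hblk2 k (Nf k) n hn).2) (hBA k n hn)
  set Aset : Set ℕ := ⋃ k, (B k : Set ℕ) with hAset
  -- membership index bound
  have hidx : ∀ (k j n : ℕ), n ∈ B j → Nf k ≤ n → k ≤ j := by
    intro k j n hn hkn
    by_contra hlt
    push_neg at hlt
    have h1 : n < Nf (j + 1) := hBub j n hn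
    have h2 : Nf (j + 1) ≤ Nf k := hNmono.monotone hlt
    omega
  refine ⟨Aset, ?_, ?_⟩
  · -- not in summable ideal
    intro hsum
    have hsum : Summable (Aset.indicator f) := hsum
    obtain ⟨m, hm⟩ := exists_nat_gt (∑' n, Aset.indicator f n)
    set F : Finset ℕ := (Finset.range m).biUnion B with hF
    have hdisj : ∀ i ∈ Finset.range m, ∀ j ∈ Finset.range m, i ≠ j →
        Disjoint (B i) (B j) := by
      intro i _ j _ hij
      rw [Finset.disjoint_left]
      intro n hni hnj
      rcases Nat.lt_or_ge i j with h | h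
      · have := hidx j i n hni (hBlb j n hnj)
        omega
      · have := hidx i j n hnj (hBlb i n hni)
        omega
    have hle : (m : ℝ) ≤ ∑ n ∈ F, Aset.indicator f n := by
      have heq : ∀ n ∈ F, Aset.indicator f n = f n := by
        intro n hn
        simp only [hF, Finset.mem_biUnion, Finset.mem_range] at hn
        obtain ⟨j, _, hj⟩ := hn
        exact Set.indicator_of_mem (Set.mem_iUnion.2 ⟨j, hj⟩) f
      rw [Finset.sum_congr rfl heq, hF, Finset.sum_biUnion]
      · calc (m : ℝ) = ∑ _j ∈ Finset.range m, (1 : ℝ) := by simp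
          _ ≤ ∑ j ∈ Finset.range m, ∑ n ∈ B j, f n :=
            Finset.sum_le_sum (fun j _ => hblk3 j (Nf j))
      · intro i hi j hj hij
        exact hdisj i hi j hj hij
    have := Summable.sum_le_tsum F
      (fun n _ => Set.indicator_nonneg (fun i _ => hf i) n) hsum
    linarith
  · -- convergence along Aset
    rw [ConvergesAlong, Metric.tendsto_nhds]
    intro ε hε
    obtain ⟨k, hk⟩ := exists_nat_one_div_lt (half_pos hε)
    rw [eventually_inf_principal]
    filter_upwards [eventually_ge_atTop (Nf k)] with n hn hnA
    obtain ⟨j, hj⟩ := Set.mem_iUnion.1 hnA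
    have hkj : k ≤ j := hidx k j n hj hn
    have h1 : dist (x n) (L j) < 1 / (k + 1) := by
      refine lt_of_lt_of_le (hBd j n hj) ?_
      apply one_div_le_one_div_of_le (by positivity)
      exact_mod_cast Nat.succ_le_succ hkj
    have h2 : dist (L j) l < 1 / (k + 1) := by
      rw [dist_comm]
      refine lt_of_lt_of_le (hdist j) ?_
      apply one_div_le_one_div_of_le (by positivity)
      exact_mod_cast Nat.succ_le_succ hkj
    calc dist (x n) l ≤ dist (x n) (L j) + dist (L j) l := dist_triangle _ _ _
      _ < 1 / (k + 1) + 1 / (k + 1) := by linarith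
      _ < ε / 2 + ε / 2 := by push_cast at hk ⊢; linarith
      _ = ε := by ring
end
end

section
/- Let I be a weakly thinnable ideal on ℕ and let x = (x_n) be a sequence taking values in a topological space. Then for Lebesgue-almost every ω ∈ (0,1] (with respect to Lebesgue measure on (0,1]), one has Λ_{x↾ω}(I) ⊆ Λ_x(I). In fact, this inclusion holds for every normal number ω ∈ (0,1], i.e., every ω whose non-terminating dyadic digits d_i(ω) satisfy lim_n (d_1(ω)+⋯+d_n(ω))/n = 1/2. -/
open Filter Topology MeasureTheory Set

noncomputable section

/-!
Under Lebesgue measure on `(0,1]`, digit `i` is a function of the dyadic cell of level `n > i`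
containing `ω`, namely bit `n-1-i` of its index; counting indices in `[0, 2ⁿ)` shows that distinct
digits are independent fair bits. The strong law of large numbers, which only needs pairwise
independence, then makes almost every `ω` normal. For normal `ω` the set `A` of positions of the
digit `1` has density `1/2`, and `x↾ω` is `x` along the enumeration of `A`; so a subsequence of
`x↾ω` along `B ∉ I` converging to `ℓ` is the subsequence of `x` along `A_B`, which is not in `I`
by weak thinnability.
-/

open scoped Finset

lemma dyadicDigit_le_one (ω : ℝ) (i : ℕ) : dyadicDigit ω i ≤ 1 := by
  have hy : (2 : ℝ) ^ (i + 1) * ω = 2 * (2 ^ i * ω) := by rw [pow_succ]; ring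
  have upper : ⌈2 * (2 ^ i * ω)⌉ ≤ 2 * ⌈(2 : ℝ) ^ i * ω⌉ :=
    Int.ceil_le.2 (by push_cast; linarith [Int.le_ceil ((2 : ℝ) ^ i * ω)])
  have lower : ((2 * ⌈(2 : ℝ) ^ i * ω⌉ - 2 : ℤ) : ℝ) < ⌈2 * (2 ^ i * ω)⌉ := by
    push_cast
    linarith [Int.ceil_lt_add_one ((2 : ℝ) ^ i * ω), Int.le_ceil (2 * ((2 : ℝ) ^ i * ω))]
  have := Int.cast_lt.1 lower
  unfold dyadicDigit
  rw [hy]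
  omega

lemma dyadicDigit_cast_eq_ite (ω : ℝ) (i : ℕ) :
    (dyadicDigit ω i : ℝ) = if dyadicDigit ω i = 1 then 1 else 0 := by
  have := dyadicDigit_le_one ω i
  split_ifs with h
  · simp [h]
  · simp [show dyadicDigit ω i = 0 by omega]

lemma measurable_dyadicDigit (i : ℕ) : Measurable fun ω => dyadicDigit ω i := by
  unfold dyadicDigit
  fun_prop

/-- The dyadic interval `(k/2ⁿ, (k+1)/2ⁿ]`, defined as a fibre of `⌈2ⁿ ·⌉` so that distinct cells
are disjoint by definition. -/
def dyadicCell (n k : ℕ) : Set ℝ := {ω | ⌈(2 : ℝ) ^ n * ω⌉ = k + 1}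

@[simp]
lemma mem_dyadicCell {n k : ℕ} {ω : ℝ} : ω ∈ dyadicCell n k ↔ ⌈(2 : ℝ) ^ n * ω⌉ = k + 1 :=
  Iff.rfl

lemma dyadicCell_eq_Ioc (n k : ℕ) :
    dyadicCell n k = Ioc ((k : ℝ) / 2 ^ n) ((k + 1) / 2 ^ n) := by
  ext ω
  have h2 : (0 : ℝ) < 2 ^ n := by positivity
  simp only [mem_dyadicCell, Int.ceil_eq_iff, mem_Ioc, div_lt_iff₀ h2, le_div_iff₀ h2]
  push_cast
  constructor <;> rintro ⟨h1, h2⟩ <;> constructor <;> linarith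

lemma measurableSet_dyadicCell (n k : ℕ) : MeasurableSet (dyadicCell n k) := by
  rw [dyadicCell_eq_Ioc]; exact measurableSet_Ioc

lemma volume_dyadicCell (n k : ℕ) : volume (dyadicCell n k) = ((2 : ENNReal) ^ n)⁻¹ := by
  rw [dyadicCell_eq_Ioc, Real.volume_Ioc, ← sub_div, add_sub_cancel_left, one_div,
    ENNReal.ofReal_inv_of_pos (by positivity), ENNReal.ofReal_pow zero_le_two, ENNReal.ofReal_ofNat]

lemma pairwise_disjoint_dyadicCell (n : ℕ) :
    Pairwise (Function.onFun Disjoint (dyadicCell n)) := by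
  intro k l hkl
  refine Set.disjoint_left.2 fun ω hk hl => hkl ?_
  simp only [mem_dyadicCell] at hk hl
  omega

lemma Ioc_zero_one_eq_biUnion_dyadicCell (n : ℕ) :
    Ioc (0 : ℝ) 1 = ⋃ k ∈ Finset.range (2 ^ n), dyadicCell n k := by
  ext ω
  have h2 : (0 : ℝ) < 2 ^ n := by positivity
  simp only [mem_Ioc, mem_iUnion, Finset.mem_range, mem_dyadicCell, exists_prop]
  constructor
  · rintro ⟨h0, h1⟩
    have hpos : 0 < ⌈(2 : ℝ) ^ n * ω⌉ := Int.ceil_pos.2 (by positivity)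
    have hle : ⌈(2 : ℝ) ^ n * ω⌉ ≤ 2 ^ n := Int.ceil_le.2 (by push_cast; nlinarith)
    refine ⟨(⌈(2 : ℝ) ^ n * ω⌉ - 1).toNat, ?_, by omega⟩
    zify [Nat.one_le_two_pow]
    omega
  · rintro ⟨k, hk, hω⟩
    have hpos : 0 < (2 : ℝ) ^ n * ω := Int.ceil_pos.1 (by omega)
    have hle : (2 : ℝ) ^ n * ω ≤ 2 ^ n := by
      exact_mod_cast Int.ceil_le.1 (show ⌈(2 : ℝ) ^ n * ω⌉ ≤ ((2 ^ n : ℕ) : ℤ) by omega)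
    exact ⟨pos_of_mul_pos_right hpos h2.le, le_of_mul_le_mul_left (by linarith) h2⟩

lemma ceil_two_pow_mul_of_mem_dyadicCell {m s k : ℕ} {ω : ℝ} (hω : ω ∈ dyadicCell (m + s) k) :
    ⌈(2 : ℝ) ^ m * ω⌉ = (k / 2 ^ s : ℕ) + 1 := by
  rw [dyadicCell_eq_Ioc, mem_Ioc] at hω
  set q := k / 2 ^ s
  have hq_le : ((q * 2 ^ s : ℕ) : ℝ) ≤ k := by exact_mod_cast Nat.div_mul_le_self k (2 ^ s)
  have hq_lt : (k + 1 : ℝ) ≤ ((2 ^ s * (q + 1) : ℕ) : ℝ) := by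
    exact_mod_cast Nat.lt_mul_div_succ k (pow_pos two_pos s)
  rw [pow_add, div_lt_iff₀ (by positivity), le_div_iff₀ (by positivity)] at hω
  push_cast at hq_le hq_lt ⊢
  rw [Int.ceil_eq_iff]
  push_cast
  constructor <;> nlinarith

lemma dyadicDigit_eq_one_iff_testBit {i s k : ℕ} {ω : ℝ} (hω : ω ∈ dyadicCell (i + 1 + s) k) :
    dyadicDigit ω i = 1 ↔ k.testBit s := by
  have h₁ := ceil_two_pow_mul_of_mem_dyadicCell hω
  have h₀ := ceil_two_pow_mul_of_mem_dyadicCell (m := i) (s := s + 1)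
    (by rwa [← add_assoc, add_right_comm])
  rw [pow_succ, ← Nat.div_div_eq_div_mul] at h₀
  rw [Nat.testBit_eq_decide_div_mod_eq, decide_eq_true_iff]
  unfold dyadicDigit
  rw [h₁, h₀]
  omega

lemma volume_inter_Ioc_eq_card_div (n : ℕ) (S : Set ℝ) (Q : ℕ → Prop) [DecidablePred Q]
    (hS : ∀ k ω, ω ∈ dyadicCell n k → (ω ∈ S ↔ Q k)) :
    volume (S ∩ Ioc 0 1) = #{k ∈ Finset.range (2 ^ n) | Q k} / 2 ^ n := by
  have hunion : S ∩ Ioc 0 1 = ⋃ k ∈ {k ∈ Finset.range (2 ^ n) | Q k}, dyadicCell n k := by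
    ext ω
    simp only [Ioc_zero_one_eq_biUnion_dyadicCell n, mem_inter_iff, mem_iUnion, Finset.mem_filter,
      exists_prop]
    constructor
    · rintro ⟨hS', k, hk, hω⟩
      exact ⟨k, ⟨hk, (hS k ω hω).1 hS'⟩, hω⟩
    · rintro ⟨k, ⟨hk, hQ⟩, hω⟩
      exact ⟨(hS k ω hω).2 hQ, k, hk, hω⟩
  rw [hunion, measure_biUnion_finset (fun k _ l _ hkl => pairwise_disjoint_dyadicCell n hkl)
    (fun k _ => measurableSet_dyadicCell n k)]
  simp only [volume_dyadicCell, Finset.sum_const, nsmul_eq_mul, div_eq_mul_inv]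

/-- Flipping bit `a` is an involution of `[0, 2ⁿ)` that exchanges the numbers with bit `a` set
and those with it clear. -/
lemma two_mul_card_filter_testBit {n a : ℕ} (ha : a < n) (Q : ℕ → Prop) [DecidablePred Q]
    (hQ : ∀ k, Q (k ^^^ 2 ^ a) ↔ Q k) :
    2 * #{k ∈ Finset.range (2 ^ n) | Q k ∧ k.testBit a} = #{k ∈ Finset.range (2 ^ n) | Q k} := by
  have hflip : ∀ k, (k ^^^ 2 ^ a).testBit a = !k.testBit a := fun k => by
    simp [Nat.testBit_xor]
  have hlt : ∀ k < 2 ^ n, k ^^^ 2 ^ a < 2 ^ n := fun k hk =>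
    Nat.xor_lt_two_pow hk (Nat.pow_lt_pow_right one_lt_two ha)
  have hswap : #{k ∈ Finset.range (2 ^ n) | Q k ∧ k.testBit a} =
      #{k ∈ Finset.range (2 ^ n) | Q k ∧ ¬ k.testBit a} := by
    refine Finset.card_nbij' (· ^^^ 2 ^ a) (· ^^^ 2 ^ a) ?_ ?_ ?_ ?_ <;>
      intro k <;> simp_all [xor_cancel_right]
  rw [two_mul]
  nth_rw 2 [hswap]
  rw [← Finset.card_filter_add_card_filter_not (s := {k ∈ Finset.range (2 ^ n) | Q k})
    (fun k => k.testBit a), Finset.filter_filter, Finset.filter_filter]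

lemma ENNReal.div_mul_cancel_right {a c : ENNReal} (hc₀ : c ≠ 0) (hc : c ≠ ⊤) :
    c / (a * c) = a⁻¹ := by
  nth_rw 1 [← one_mul c]
  rw [ENNReal.mul_div_mul_right _ _ hc₀ hc, one_div]

lemma volume_dyadicDigit_eq_one (i : ℕ) :
    volume ({ω : ℝ | dyadicDigit ω i = 1} ∩ Ioc 0 1) = 2⁻¹ := by
  rw [volume_inter_Ioc_eq_card_div (i + 1) {ω | dyadicDigit ω i = 1} (fun k => k.testBit 0)
    (fun k ω hω => dyadicDigit_eq_one_iff_testBit (s := 0) hω)]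
  have hcount := two_mul_card_filter_testBit (n := i + 1) i.succ_pos (fun _ => True) (by simp)
  simp only [true_and, Finset.filter_true, Finset.card_range] at hcount
  set c := #{k ∈ Finset.range (2 ^ (i + 1)) | k.testBit 0}
  have hc : c ≠ 0 := by have := Nat.two_pow_pos (i + 1); omega
  have hpow : (2 : ENNReal) ^ (i + 1) = 2 * c := by exact_mod_cast hcount.symm
  rw [hpow, ENNReal.div_mul_cancel_right (by exact_mod_cast hc) (ENNReal.natCast_ne_top c)]

lemma volume_dyadicDigit_eq_one_inter {i j : ℕ} (hij : i < j) :
    volume ({ω : ℝ | dyadicDigit ω i = 1} ∩ {ω | dyadicDigit ω j = 1} ∩ Ioc 0 1) = 4⁻¹ := by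
  have hn : i + 1 + (j - i) = j + 1 + 0 := by omega
  rw [volume_inter_Ioc_eq_card_div (j + 1)
    ({ω | dyadicDigit ω i = 1} ∩ {ω | dyadicDigit ω j = 1})
    (fun k => k.testBit (j - i) ∧ k.testBit 0)
    (fun k ω hω => and_congr (dyadicDigit_eq_one_iff_testBit (hn ▸ hω))
      (dyadicDigit_eq_one_iff_testBit hω))]
  have h₀ := two_mul_card_filter_testBit (n := j + 1) j.succ_pos (fun k => k.testBit (j - i))
    (fun k => by simp only [Nat.testBit_xor, Nat.testBit_two_pow, show 0 ≠ j - i by omega,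
      decide_false, Bool.xor_false])
  have h₁ := two_mul_card_filter_testBit (n := j + 1) (a := j - i) (by omega) (fun _ => True)
    (by simp)
  simp only [true_and, Finset.filter_true, Finset.card_range] at h₁
  set c := #{k ∈ Finset.range (2 ^ (j + 1)) | k.testBit (j - i) ∧ k.testBit 0}
  have hc : c ≠ 0 := by have := Nat.two_pow_pos (j + 1); omega
  have hpow : (2 : ENNReal) ^ (j + 1) = 4 * c := by
    exact_mod_cast (by omega : 2 ^ (j + 1) = 4 * c)
  rw [hpow, ENNReal.div_mul_cancel_right (by exact_mod_cast hc) (ENNReal.natCast_ne_top c)]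

section

open ProbabilityTheory

variable {Ω Ω' : Type*} {mΩ : MeasurableSpace Ω} {mΩ' : MeasurableSpace Ω'}
  {μ : Measure Ω} {ν : Measure Ω'}

lemma ProbabilityTheory.IndepSet.indepFun_indicator_one {s t : Set Ω} (h : IndepSet s t μ) :
    IndepFun (s.indicator fun _ => (1 : ℝ)) (t.indicator fun _ => (1 : ℝ)) μ := by
  have comap_le : ∀ u : Set Ω, MeasurableSpace.comap (u.indicator fun _ => (1 : ℝ)) inferInstance
      ≤ MeasurableSpace.generateFrom {u} := fun u =>
    (measurable_const.indicator
      (MeasurableSpace.measurableSet_generateFrom (mem_singleton u))).comap_le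
  exact indep_of_indep_of_le_right (indep_of_indep_of_le_left h (comap_le s)) (comap_le t)

lemma ProbabilityTheory.identDistrib_indicator_one [IsProbabilityMeasure μ]
    [IsProbabilityMeasure ν] {s : Set Ω} {t : Set Ω'} (hs : MeasurableSet s)
    (ht : MeasurableSet t) (h : μ s = ν t) :
    IdentDistrib (s.indicator fun _ => (1 : ℝ)) (t.indicator fun _ => (1 : ℝ)) μ ν where
  aemeasurable_fst := (measurable_const.indicator hs).aemeasurable
  aemeasurable_snd := (measurable_const.indicator ht).aemeasurable
  map_eq := by
    classical
    ext E hE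
    rw [Measure.map_apply (measurable_const.indicator hs) hE,
      Measure.map_apply (measurable_const.indicator ht) hE, indicator_const_preimage_eq_union,
      indicator_const_preimage_eq_union]
    split_ifs <;> simp [prob_compl_eq_one_sub hs, prob_compl_eq_one_sub ht, h]

end

open ProbabilityTheory in
theorem ae_tendsto_avg_dyadicDigit :
    ∀ᵐ ω ∂(volume.restrict (Ioc (0 : ℝ) 1)),
      Tendsto (fun n => (∑ i ∈ Finset.range n, (dyadicDigit ω i : ℝ)) / n) atTop (𝓝 (1 / 2)) := by
  set μ := volume.restrict (Ioc (0 : ℝ) 1)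
  have : IsProbabilityMeasure μ := ⟨by simp [μ]⟩
  set D : ℕ → Set ℝ := fun i => {ω | dyadicDigit ω i = 1}
  set Y : ℕ → ℝ → ℝ := fun i => (D i).indicator fun _ => 1
  have hD : ∀ i, MeasurableSet (D i) := fun i =>
    measurable_dyadicDigit i (measurableSet_singleton 1)
  have hμD : ∀ i, μ (D i) = 2⁻¹ := fun i => by
    rw [Measure.restrict_apply (hD i)]; exact volume_dyadicDigit_eq_one i
  have hindep : ∀ {i j}, i < j → IndepFun (Y i) (Y j) μ := fun {i j} hij => by
    refine IndepSet.indepFun_indicator_one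
      ((indepSet_iff_measure_inter_eq_mul (hD i) (hD j) μ).2 ?_)
    rw [Measure.restrict_apply ((hD i).inter (hD j)), volume_dyadicDigit_eq_one_inter hij,
      hμD, hμD, ← ENNReal.mul_inv (by simp) (by simp)]
    norm_num
  have hmean : ∫ ω, Y 0 ω ∂μ = 1 / 2 := by
    simp [Y, integral_indicator_const _ (hD 0), Measure.real, hμD]
  have hlaw := strong_law_ae_real Y ((integrable_const 1).indicator (hD 0))
    (fun i j hij => hij.lt_or_gt.elim hindep fun h => (hindep h).symm)
    (fun i => identDistrib_indicator_one (hD i) (hD 0) (by rw [hμD, hμD]))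
  rw [hmean] at hlaw
  filter_upwards [hlaw] with ω hω
  simpa [Y, D, indicator_apply, ← dyadicDigit_cast_eq_ite] using hω

lemma HasDensity.eq_zero_of_finite {A : Set ℕ} {d : ℝ} (hA : HasDensity A d) (hfin : A.Finite) :
    d = 0 := by
  obtain ⟨b, hb⟩ := hfin.bddAbove
  refine tendsto_nhds_unique hA (Tendsto.congr' ?_ (tendsto_const_div_atTop_nhds_zero_nat
    (∑ i ∈ Finset.range (b + 1), A.indicator (fun _ => (1 : ℝ)) i)))
  filter_upwards [eventually_ge_atTop (b + 1)] with n hn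
  congr 1
  refine Finset.sum_subset (Finset.range_subset_range.2 hn) fun i _ hi => ?_
  exact indicator_of_notMem (fun hiA => hi (Finset.mem_range.2 (Nat.lt_succ_of_le (hb hiA)))) _

lemma ConvergesAlong.sel {X : Type*} [TopologicalSpace X] {x : ℕ → X} {A B : Set ℕ} {l : X}
    (hA : A.Infinite) (h : ConvergesAlong (fun k => x (Nat.nth (· ∈ A) k)) B l) :
    ConvergesAlong x (sel A B) l := by
  intro U hU
  obtain ⟨N, hN⟩ := mem_atTop_sets.1 (mem_inf_principal.1 (h hU))
  refine mem_inf_principal.2 (mem_atTop_sets.2 ⟨Nat.nth (· ∈ A) N, ?_⟩)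
  rintro _ hn ⟨b, hb, rfl⟩
  exact hN b ((Nat.nth_le_nth hA).1 hn) hb

theorem WeaklyThinnable.idealLimitPoints_comp_nth_subset {X : Type*} [TopologicalSpace X]
    {I : Set (Set ℕ)} (hI : WeaklyThinnable I) {A : Set ℕ} {d : ℝ} (hd : 0 < d)
    (hA : HasDensity A d) (x : ℕ → X) :
    idealLimitPoints I (fun k => x (Nat.nth (· ∈ A) k)) ⊆ idealLimitPoints I x := by
  rintro l ⟨B, hB, hconv⟩
  have hAinf : A.Infinite := fun hfin => hd.ne' (hA.eq_zero_of_finite hfin)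
  exact ⟨sel A B, hI A B ⟨d, hd, hA⟩ hB, hconv.sel hAinf⟩

lemma hasDensity_dyadicDigit_eq_one {ω : ℝ}
    (h : Tendsto (fun n => (∑ i ∈ Finset.range n, (dyadicDigit ω i : ℝ)) / n) atTop (𝓝 (1 / 2))) :
    HasDensity {i | dyadicDigit ω i = 1} (1 / 2) := by
  simpa [HasDensity, indicator_apply, ← dyadicDigit_cast_eq_ite] using h

theorem stmt3_general {X : Type*} [TopologicalSpace X] (I : Set (Set ℕ))
    (hwt : WeaklyThinnable I) (x : ℕ → X) :
    (∀ ω ∈ Set.Ioc (0 : ℝ) 1,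
      Tendsto (fun n => (∑ i ∈ Finset.range n, (dyadicDigit ω i : ℝ)) / (n : ℝ))
        atTop (𝓝 (1 / 2)) →
      idealLimitPoints I (subseq x ω) ⊆ idealLimitPoints I x) ∧
    volume {ω ∈ Set.Ioc (0 : ℝ) 1 |
      idealLimitPoints I (subseq x ω) ⊆ idealLimitPoints I x} = 1 := by
  have normal_subset : ∀ ω, Tendsto (fun n => (∑ i ∈ Finset.range n, (dyadicDigit ω i : ℝ)) / n)
      atTop (𝓝 (1 / 2)) → idealLimitPoints I (subseq x ω) ⊆ idealLimitPoints I x :=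
    fun ω h =>
      hwt.idealLimitPoints_comp_nth_subset one_half_pos (hasDensity_dyadicDigit_eq_one h) x
  refine ⟨fun ω _ => normal_subset ω, ?_⟩
  have hae : ∀ᵐ ω ∂(volume.restrict (Ioc (0 : ℝ) 1)),
      idealLimitPoints I (subseq x ω) ⊆ idealLimitPoints I x :=
    ae_tendsto_avg_dyadicDigit.mono fun ω => normal_subset ω
  calc volume {ω ∈ Ioc (0 : ℝ) 1 | idealLimitPoints I (subseq x ω) ⊆ idealLimitPoints I x}
      = volume.restrict (Ioc (0 : ℝ) 1)
          {ω | idealLimitPoints I (subseq x ω) ⊆ idealLimitPoints I x} := by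
        rw [Measure.restrict_apply' measurableSet_Ioc, inter_comm]; rfl
    _ = volume.restrict (Ioc (0 : ℝ) 1) univ := measure_congr (ae_eq_univ.2 (ae_iff.1 hae))
    _ = 1 := by simp

/-- If `I` is a weakly thinnable ideal and `x` a sequence in a topological
space, then `Λ_{x↾ω}(I) ⊆ Λ_x(I)` for every normal number `ω ∈ (0,1]`, and hence for
Lebesgue-almost every `ω ∈ (0,1]`. -/
theorem stmt3 {X : Type*} [TopologicalSpace X] (I : Set (Set ℕ)) (hI : IsIdealOnNat I)
    (hwt : WeaklyThinnable I) (x : ℕ → X) :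
    (∀ ω ∈ Set.Ioc (0 : ℝ) 1,
      Tendsto (fun n => (∑ i ∈ Finset.range n, (dyadicDigit ω i : ℝ)) / (n : ℝ))
        atTop (𝓝 (1 / 2)) →
      idealLimitPoints I (subseq x ω) ⊆ idealLimitPoints I x) ∧
    volume {ω ∈ Set.Ioc (0 : ℝ) 1 |
      idealLimitPoints I (subseq x ω) ⊆ idealLimitPoints I x} = 1 :=
  stmt3_general I hwt x
end
end

section
/- Let α ≥ -1 be a real number and let x = (x_n) be the real sequence with x_1 = 1 and x_n = 1/f(n) for n ≥ 2, where f(n) denotes the least prime factor of n. Then the set Λ_x(I_α) of I_α-limit points of x is not closed in ℝ (it contains 1/p for every prime p but does not contain 0). -/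
open Filter Topology MeasureTheory Set

noncomputable section

namespace Stmt12Aux

open scoped Classical

def w (α : ℝ) (i : ℕ) : ℝ := (i : ℝ) ^ α
def SS (α : ℝ) (n : ℕ) : ℝ := ∑ i ∈ Finset.Icc 1 n, w α i
def NA (α : ℝ) (A : Set ℕ) (n : ℕ) : ℝ := ∑ i ∈ Finset.Icc 1 n, A.indicator (w α) i
def CC (α : ℝ) : ℝ := (2 : ℝ) ^ |α|
def ff (α : ℝ) (A : Set ℕ) (n : ℕ) : ℝ := NA α A n / SS α n

variable {α : ℝ}

lemma w_nonneg (i : ℕ) : 0 ≤ w α i := Real.rpow_nonneg (Nat.cast_nonneg i) α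

lemma w_pos {i : ℕ} (hi : 1 ≤ i) : 0 < w α i :=
  Real.rpow_pos_of_pos (by exact_mod_cast hi : (0:ℝ) < i) α

lemma one_le_CC : 1 ≤ CC α := Real.one_le_rpow one_le_two (abs_nonneg α)

lemma CC_pos : 0 < CC α := lt_of_lt_of_le one_pos one_le_CC

lemma w_ratio {i j : ℕ} (hi : 1 ≤ i) (hij : i ≤ j) (hj : j ≤ 2 * i) :
    w α j ≤ CC α * w α i ∧ w α i ≤ CC α * w α j := by
  have hi' : (1:ℝ) ≤ (i:ℝ) := by exact_mod_cast hi
  have hi0 : (0:ℝ) < (i:ℝ) := lt_of_lt_of_le one_pos hi'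
  have hj0 : (0:ℝ) < (j:ℝ) := lt_of_lt_of_le hi0 (by exact_mod_cast hij)
  have hij' : (i:ℝ) ≤ (j:ℝ) := by exact_mod_cast hij
  have hj' : (j:ℝ) ≤ 2 * (i:ℝ) := by exact_mod_cast hj
  rcases le_or_gt 0 α with h0 | h0
  · have hC : CC α = (2:ℝ) ^ α := by rw [CC, abs_of_nonneg h0]
    constructor
    · calc w α j ≤ ((2:ℝ) * i) ^ α := Real.rpow_le_rpow hj0.le hj' h0
        _ = (2:ℝ) ^ α * (i:ℝ) ^ α := Real.mul_rpow (by norm_num) hi0.le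
        _ = CC α * w α i := by rw [hC, w]
    · have h1 : w α i ≤ w α j := Real.rpow_le_rpow hi0.le hij' h0
      have h2 : (1:ℝ) * w α j ≤ CC α * w α j :=
        mul_le_mul_of_nonneg_right one_le_CC (w_nonneg j)
      linarith
  · have hC : CC α = (2:ℝ) ^ (-α) := by rw [CC, abs_of_neg h0]
    have h2a : (0:ℝ) < (2:ℝ) ^ α := Real.rpow_pos_of_pos two_pos α
    have hCC : CC α * (2:ℝ) ^ α = 1 := by
      rw [hC, ← Real.rpow_add two_pos]; simp
    constructor
    · have h1 : w α j ≤ w α i := Real.rpow_le_rpow_of_nonpos hi0 hij' h0.le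
      have h2 : (1:ℝ) * w α i ≤ CC α * w α i :=
        mul_le_mul_of_nonneg_right one_le_CC (w_nonneg i)
      linarith
    · have h1 : ((2:ℝ) * i) ^ α ≤ (j:ℝ) ^ α :=
        Real.rpow_le_rpow_of_nonpos hj0 hj' h0.le
      have h2 : ((2:ℝ) * i) ^ α = (2:ℝ) ^ α * (i:ℝ) ^ α := Real.mul_rpow (by norm_num) hi0.le
      have h3 : CC α * ((2:ℝ)^α * (i:ℝ)^α) ≤ CC α * (j:ℝ)^α := by
        apply mul_le_mul_of_nonneg_left _ (le_of_lt CC_pos)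
        rw [← h2]; exact h1
      have h4 : CC α * ((2:ℝ)^α * (i:ℝ)^α) = (i:ℝ)^α := by
        rw [← mul_assoc, hCC, one_mul]
      rw [w, w]; linarith


lemma SS_nonneg (n : ℕ) : 0 ≤ SS α n :=
  Finset.sum_nonneg fun i _ => w_nonneg i

lemma SS_mono : Monotone (SS α) := by
  intro a b hab
  exact Finset.sum_le_sum_of_subset_of_nonneg (Finset.Icc_subset_Icc_right hab)
    (fun i _ _ => w_nonneg i)

lemma SS_pos {n : ℕ} (hn : 1 ≤ n) : 0 < SS α n := by
  apply Finset.sum_pos (fun i hi => w_pos (Finset.mem_Icc.mp hi).1)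
  exact ⟨1, Finset.mem_Icc.mpr ⟨le_refl 1, hn⟩⟩

lemma NA_nonneg (A : Set ℕ) (n : ℕ) : 0 ≤ NA α A n :=
  Finset.sum_nonneg fun i _ => Set.indicator_nonneg (fun j _ => w_nonneg j) i

lemma NA_le_SS (A : Set ℕ) (n : ℕ) : NA α A n ≤ SS α n :=
  Finset.sum_le_sum fun i _ => Set.indicator_le_self' (fun j _ => w_nonneg j) i

lemma ff_nonneg (A : Set ℕ) (n : ℕ) : 0 ≤ ff α A n :=
  div_nonneg (NA_nonneg A n) (SS_nonneg n)

lemma ff_le_one (A : Set ℕ) (n : ℕ) : ff α A n ≤ 1 := by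
  rcases Nat.eq_zero_or_pos n with h | h
  · simp [ff, h, NA, SS]
  · rw [ff, div_le_one (SS_pos h)]; exact NA_le_SS A n

lemma SS_tendsto (hα : -1 ≤ α) : Tendsto (SS α) atTop atTop := by
  have hH : ∀ n : ℕ, (∑ i ∈ Finset.range n, (1 / ((i:ℝ) + 1))) ≤ SS α n := by
    intro n
    have heq : ∀ n : ℕ, (∑ i ∈ Finset.range n, (1 / ((i:ℝ) + 1)))
        = ∑ i ∈ Finset.Icc 1 n, (1 / (i:ℝ)) := by
      intro n
      induction n with
      | zero => simp
      | succ n ih =>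
        rw [Finset.sum_range_succ, ih,
          Finset.sum_Icc_succ_top (by omega : 1 ≤ n + 1) (fun i : ℕ => 1 / (i:ℝ))]
        push_cast; ring
    rw [heq]
    apply Finset.sum_le_sum
    intro i hi
    have hi1 : 1 ≤ i := (Finset.mem_Icc.mp hi).1
    have hi' : (1:ℝ) ≤ (i:ℝ) := by exact_mod_cast hi1
    have := Real.rpow_le_rpow_of_exponent_le hi' hα
    rw [Real.rpow_neg_one] at this
    rw [one_div]
    exact this
  exact tendsto_atTop_mono hH Real.tendsto_sum_range_one_div_nat_succ_atTop

/-- block `k` -/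
def blk (m k : ℕ) : Finset ℕ := Finset.Ioc (k * m) ((k + 1) * m)

def Tk (α : ℝ) (m k : ℕ) : ℝ := ∑ i ∈ blk m k, w α i

lemma Tk_nonneg (m k : ℕ) : 0 ≤ Tk α m k := Finset.sum_nonneg fun i _ => w_nonneg i

lemma decomp (m : ℕ) (g : ℕ → ℝ) (K : ℕ) :
    ∑ i ∈ Finset.Icc 1 (K * m), g i = ∑ k ∈ Finset.range K, ∑ i ∈ blk m k, g i := by
  induction K with
  | zero => simp
  | succ K ih =>
    rw [Finset.sum_range_succ, ← ih, blk]
    rw [show (Finset.Icc 1 (K * m)) = Finset.Ioc 0 (K * m) from rfl,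
        show (Finset.Icc 1 ((K+1) * m)) = Finset.Ioc 0 ((K+1) * m) from rfl]
    exact (Finset.sum_Ioc_consecutive g (Nat.zero_le _)
      (Nat.mul_le_mul_right m (Nat.le_succ K))).symm

lemma mem_blk {m k i : ℕ} : i ∈ blk m k ↔ k * m < i ∧ i ≤ (k + 1) * m := Finset.mem_Ioc

lemma blk_compare {m k i j : ℕ} (hm : 1 ≤ m) (hk : 1 ≤ k)
    (hi : i ∈ blk m k) (hj : j ∈ blk m k) : w α i ≤ CC α * w α j := by
  rw [mem_blk] at hi hj
  have h1 : 1 ≤ m * k := Nat.one_le_iff_ne_zero.mpr (by positivity)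
  rcases le_total i j with h | h
  · have h2 : j ≤ 2 * i := by nlinarith [hi.1, hj.2]
    exact (w_ratio (by nlinarith [hi.1]) h h2).2
  · have h2 : i ≤ 2 * j := by nlinarith [hj.1, hi.2]
    exact (w_ratio (by nlinarith [hj.1]) h h2).1

lemma card_blk (m k : ℕ) : (blk m k).card = m := by
  rw [blk, Nat.card_Ioc]; ring_nf; omega

lemma w_le_Tk {m k i : ℕ} (hm : 1 ≤ m) (hk : 1 ≤ k) (hi : i ∈ blk m k) :
    (m : ℝ) * w α i ≤ CC α * Tk α m k := by
  have : (m:ℝ) * w α i = ∑ _j ∈ blk m k, w α i := by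
    rw [Finset.sum_const, card_blk, nsmul_eq_mul]
  rw [this, Tk, Finset.mul_sum]
  exact Finset.sum_le_sum fun j hj => blk_compare hm hk hi hj

lemma Tk_le_w {m k i : ℕ} (hm : 1 ≤ m) (hk : 1 ≤ k) (hi : i ∈ blk m k) :
    Tk α m k ≤ (m : ℝ) * (CC α * w α i) := by
  have : (m:ℝ) * (CC α * w α i) = ∑ _j ∈ blk m k, CC α * w α i := by
    rw [Finset.sum_const, card_blk, nsmul_eq_mul]
  rw [this, Tk]
  exact Finset.sum_le_sum fun j hj => blk_compare hm hk hj hi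

lemma Tk_succ_le {m k : ℕ} (hm : 1 ≤ m) (hk : 1 ≤ k) :
    Tk α m (k + 1) ≤ CC α * Tk α m k := by
  have himg : (blk m k).image (· + m) = blk m (k + 1) := by
    rw [blk, blk, Finset.image_add_right_Ioc]
    congr 1 <;> ring
  rw [Tk, ← himg, Finset.sum_image (fun a _ b _ h => by omega)]
  rw [Tk, Finset.mul_sum]
  apply Finset.sum_le_sum
  intro i hi
  rw [mem_blk] at hi
  have h1 : 1 ≤ m * k := Nat.one_le_iff_ne_zero.mpr (by positivity)
  exact (w_ratio (by nlinarith [hi.1]) (Nat.le_add_right i m) (by nlinarith [hi.1])).1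


lemma pointwise_upper {m r k₀ : ℕ} (hm : 1 ≤ m) (hk₀ : 1 ≤ k₀) (A : Set ℕ)
    (hcard : ∀ k, k₀ ≤ k → ((blk m k).filter (· ∈ A)).card ≤ r) :
    ∀ n, (k₀ + 2) * m ≤ n →
      NA α A n ≤ (∑ k ∈ Finset.range k₀, Tk α m k)
        + (r : ℝ) / m * (CC α * (1 + CC α)) * SS α n := by
  intro n hn
  set k := n / m with hkdef
  have hm0 : 0 < m := hm
  have hk2 : k₀ + 2 ≤ k := (Nat.le_div_iff_mul_le hm0).mpr hn
  have hnk : n ≤ (k + 1) * m := by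
    have h1 := Nat.div_add_mod n m
    have h2 := Nat.mod_lt n hm0
    have h3 : (k + 1) * m = m * (n / m) + m := by rw [hkdef]; ring
    omega
  have hkm : k * m ≤ n := Nat.div_mul_le_self n m
  have hmr : (0:ℝ) < (m:ℝ) := by exact_mod_cast hm0
  -- numerator monotonicity
  have step1 : NA α A n ≤ NA α A ((k + 1) * m) :=
    Finset.sum_le_sum_of_subset_of_nonneg (Finset.Icc_subset_Icc_right hnk)
      (fun i _ _ => Set.indicator_nonneg (fun j _ => w_nonneg j) i)
  -- decompose
  have step2 : NA α A ((k + 1) * m)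
      = ∑ k' ∈ Finset.range (k + 1), ∑ i ∈ blk m k', A.indicator (w α) i :=
    decomp m _ (k + 1)
  -- split range
  have hsplit : ∑ k' ∈ Finset.range (k + 1), ∑ i ∈ blk m k', A.indicator (w α) i
      = (∑ k' ∈ Finset.Ico 0 k₀, ∑ i ∈ blk m k', A.indicator (w α) i)
        + ∑ k' ∈ Finset.Ico k₀ (k + 1), ∑ i ∈ blk m k', A.indicator (w α) i := by
    rw [Finset.range_eq_Ico,
      ← Finset.sum_Ico_consecutive _ (Nat.zero_le k₀) (by omega : k₀ ≤ k + 1)]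
  -- early blocks
  have hearly : ∑ k' ∈ Finset.Ico 0 k₀, ∑ i ∈ blk m k', A.indicator (w α) i
      ≤ ∑ k' ∈ Finset.range k₀, Tk α m k' := by
    rw [Finset.range_eq_Ico]
    exact Finset.sum_le_sum fun k' _ => Finset.sum_le_sum fun i _ =>
      Set.indicator_le_self' (fun j _ => w_nonneg j) i
  -- late blocks
  have hlate : ∀ k', k₀ ≤ k' → ∑ i ∈ blk m k', A.indicator (w α) i
      ≤ (r : ℝ) * (CC α * Tk α m k' / m) := by
    intro k' hk'
    rw [Finset.sum_indicator_eq_sum_filter]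
    have hbound : ∀ i ∈ (blk m k').filter (· ∈ A), w α i ≤ CC α * Tk α m k' / m := by
      intro i hi
      have hi' : i ∈ blk m k' := Finset.mem_filter.mp hi |>.1
      rw [le_div_iff₀ hmr, mul_comm]
      exact w_le_Tk hm (le_trans hk₀ hk') hi'
    calc ∑ i ∈ (blk m k').filter (· ∈ A), w α i
        ≤ ((blk m k').filter (· ∈ A)).card • (CC α * Tk α m k' / m) :=
          Finset.sum_le_card_nsmul _ _ _ hbound
      _ ≤ (r : ℝ) * (CC α * Tk α m k' / m) := by
          rw [nsmul_eq_mul]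
          apply mul_le_mul_of_nonneg_right
          · exact_mod_cast hcard k' hk'
          · exact div_nonneg (mul_nonneg CC_pos.le (Tk_nonneg m k')) hmr.le
  have hlatesum : ∑ k' ∈ Finset.Ico k₀ (k + 1), ∑ i ∈ blk m k', A.indicator (w α) i
      ≤ (r : ℝ) * CC α / m * ∑ k' ∈ Finset.Ico k₀ (k + 1), Tk α m k' := by
    rw [Finset.mul_sum]
    exact Finset.sum_le_sum fun k' hk' => le_of_le_of_eq
      (hlate k' (Finset.mem_Ico.mp hk').1) (by ring)
  -- sum of Tk over Ico ≤ SS ((k+1)m)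
  have hSS_decomp : ∀ K : ℕ, SS α (K * m) = ∑ k' ∈ Finset.range K, Tk α m k' :=
    fun K => decomp m (w α) K
  have hTsum : ∑ k' ∈ Finset.Ico k₀ (k + 1), Tk α m k'
      ≤ SS α ((k + 1) * m) := by
    rw [hSS_decomp (k+1), Finset.range_eq_Ico]
    exact Finset.sum_le_sum_of_subset_of_nonneg
      (Finset.Ico_subset_Ico (Nat.zero_le k₀) le_rfl) (fun i _ _ => Tk_nonneg m i)
  -- SS ((k+1)m) ≤ (1 + CC α) * SS n
  have hSS1 : SS α ((k + 1) * m) = SS α (k * m) + Tk α m k := by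
    rw [hSS_decomp (k+1), Finset.sum_range_succ, hSS_decomp k]
  have hTk : Tk α m k ≤ CC α * Tk α m (k - 1) := by
    have : k - 1 + 1 = k := by omega
    rw [← this]
    exact Tk_succ_le hm (by omega)
  have hTk1 : Tk α m (k - 1) ≤ SS α (k * m) := by
    rw [hSS_decomp k]
    exact Finset.single_le_sum (fun i _ => Tk_nonneg m i)
      (Finset.mem_range.mpr (by omega))
  have hSSn : SS α (k * m) ≤ SS α n := SS_mono hkm
  have hSS2 : SS α ((k + 1) * m) ≤ (1 + CC α) * SS α n := by
    have h1 : Tk α m k ≤ CC α * SS α n :=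
      le_trans hTk (mul_le_mul_of_nonneg_left (le_trans hTk1 hSSn) CC_pos.le)
    nlinarith [hSS1, hSSn]
  -- combine
  have hfinal : (r : ℝ) * CC α / m * SS α ((k+1)*m)
      ≤ (r : ℝ) / m * (CC α * (1 + CC α)) * SS α n := by
    calc (r : ℝ) * CC α / m * SS α ((k+1)*m)
        ≤ (r : ℝ) * CC α / m * ((1 + CC α) * SS α n) := by
          apply mul_le_mul_of_nonneg_left hSS2
            (div_nonneg (mul_nonneg (Nat.cast_nonneg r) CC_pos.le) hmr.le)
      _ = (r : ℝ) / m * (CC α * (1 + CC α)) * SS α n := by ring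
  have hmid : (r : ℝ) * CC α / m * ∑ k' ∈ Finset.Ico k₀ (k + 1), Tk α m k'
      ≤ (r : ℝ) * CC α / m * SS α ((k+1)*m) :=
    mul_le_mul_of_nonneg_left hTsum
      (div_nonneg (mul_nonneg (Nat.cast_nonneg r) CC_pos.le) hmr.le)
  calc NA α A n ≤ NA α A ((k + 1) * m) := step1
    _ = _ := step2
    _ = _ := hsplit
    _ ≤ (∑ k' ∈ Finset.range k₀, Tk α m k')
        + (r : ℝ) / m * (CC α * (1 + CC α)) * SS α n := by
        exact add_le_add hearly (le_trans hlatesum (le_trans hmid hfinal))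


lemma upperAlphaDensity_eq (A : Set ℕ) :
    upperAlphaDensity α A = limsup (ff α A) atTop := rfl

lemma cobounded (A : Set ℕ) : IsCoboundedUnder (· ≤ ·) atTop (ff α A) :=
  IsBoundedUnder.isCoboundedUnder_le
    (Filter.isBoundedUnder_of ⟨0, fun n => ff_nonneg A n⟩)

lemma bounded (A : Set ℕ) : IsBoundedUnder (· ≤ ·) atTop (ff α A) :=
  Filter.isBoundedUnder_of ⟨1, fun n => ff_le_one A n⟩

lemma upperAlphaDensity_nonneg (A : Set ℕ) : 0 ≤ upperAlphaDensity α A := by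
  rw [upperAlphaDensity_eq]
  exact le_limsup_of_frequently_le
    (Eventually.frequently (Eventually.of_forall fun n => ff_nonneg A n)) (bounded A)

lemma real_le_of_forall_pos_le_add {a b : ℝ} (h : ∀ ε : ℝ, 0 < ε → a ≤ b + ε) : a ≤ b := by
  by_contra hc
  push_neg at hc
  have := h ((a - b) / 2) (by linarith)
  linarith

lemma upper_master (hα : -1 ≤ α) {m r k₀ : ℕ} (hm : 1 ≤ m) (hk₀ : 1 ≤ k₀) (A : Set ℕ)
    (hcard : ∀ k, k₀ ≤ k → ((blk m k).filter (· ∈ A)).card ≤ r) :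
    upperAlphaDensity α A ≤ (r : ℝ) / m * (CC α * (1 + CC α)) := by
  set B : ℝ := (r : ℝ) / m * (CC α * (1 + CC α)) with hB
  set D : ℝ := ∑ k ∈ Finset.range k₀, Tk α m k with hD
  have hD0 : 0 ≤ D := Finset.sum_nonneg fun i _ => Tk_nonneg m i
  apply real_le_of_forall_pos_le_add
  intro ε hε
  rw [upperAlphaDensity_eq]
  apply limsup_le_of_le (cobounded A)
  have h1 : ∀ᶠ n in atTop, D / ε ≤ SS α n := (SS_tendsto hα).eventually_ge_atTop _
  have h2 : ∀ᶠ n in atTop, (k₀ + 2) * m ≤ n := eventually_ge_atTop _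
  have h3 : ∀ᶠ n in atTop, 1 ≤ n := eventually_ge_atTop 1
  filter_upwards [h1, h2, h3] with n hn1 hn2 hn3
  have hS : 0 < SS α n := SS_pos hn3
  have hnum := pointwise_upper (α := α) hm hk₀ A hcard n hn2
  show NA α A n / SS α n ≤ B + ε
  rw [div_le_iff₀ hS]
  have hDe : D ≤ ε * SS α n := by
    rw [div_le_iff₀ hε] at hn1
    linarith [hn1]
  calc NA α A n ≤ D + B * SS α n := hnum
    _ ≤ ε * SS α n + B * SS α n := by linarith
    _ = (B + ε) * SS α n := by ring

lemma lower_master (hα : -1 ≤ α) {m : ℕ} (hm : 1 ≤ m) (A : Set ℕ)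
    (hmem : ∀ k, 1 ≤ k → ∃ i ∈ blk m k, i ∈ A) :
    upperAlphaDensity α A ≠ 0 := by
  have hmr : (0:ℝ) < (m:ℝ) := by exact_mod_cast hm
  set c : ℝ := 1 / (2 * CC α * m) with hc
  have hc0 : 0 < c := by
    apply div_pos one_pos
    exact mul_pos (mul_pos two_pos CC_pos) hmr
  have hSS_decomp : ∀ K : ℕ, SS α (K * m) = ∑ k' ∈ Finset.range K, Tk α m k' :=
    fun K => decomp m (w α) K
  have hNA_decomp : ∀ K : ℕ, NA α A (K * m)
      = ∑ k' ∈ Finset.range K, ∑ i ∈ blk m k', A.indicator (w α) i :=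
    fun K => decomp m _ K
  -- key lower bound
  have key : ∀ K : ℕ, 1 ≤ K →
      SS α (K * m) - Tk α m 0 ≤ (CC α * m) * NA α A (K * m) := by
    intro K hK
    have hTA : ∀ k', 1 ≤ k' → Tk α m k' ≤ (CC α * m) * ∑ i ∈ blk m k', A.indicator (w α) i := by
      intro k' hk'
      obtain ⟨i, hiblk, hiA⟩ := hmem k' hk'
      have h1 : Tk α m k' ≤ (m : ℝ) * (CC α * w α i) := Tk_le_w hm hk' hiblk
      have h2 : w α i ≤ ∑ j ∈ blk m k', A.indicator (w α) j := by
        have : A.indicator (w α) i = w α i := Set.indicator_of_mem hiA _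
        rw [← this]
        exact Finset.single_le_sum
          (fun j _ => Set.indicator_nonneg (fun j' _ => w_nonneg j') j) hiblk
      calc Tk α m k' ≤ (m : ℝ) * (CC α * w α i) := h1
        _ = (CC α * m) * w α i := by ring
        _ ≤ (CC α * m) * ∑ j ∈ blk m k', A.indicator (w α) j := by
            apply mul_le_mul_of_nonneg_left h2 (mul_nonneg CC_pos.le hmr.le)
    have hsplit : Tk α m 0 + ∑ k' ∈ Finset.Ico 1 K, Tk α m k'
        = ∑ k' ∈ Finset.range K, Tk α m k' := by
      rw [Finset.range_eq_Ico, ← Finset.sum_Ico_consecutive _ (Nat.zero_le 1) hK]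
      simp
    have h3 : ∑ k' ∈ Finset.Ico 1 K, Tk α m k'
        ≤ (CC α * m) * ∑ k' ∈ Finset.Ico 1 K, ∑ i ∈ blk m k', A.indicator (w α) i := by
      rw [Finset.mul_sum]
      exact Finset.sum_le_sum fun k' hk' => hTA k' (Finset.mem_Ico.mp hk').1
    have h4 : ∑ k' ∈ Finset.Ico 1 K, ∑ i ∈ blk m k', A.indicator (w α) i
        ≤ NA α A (K * m) := by
      rw [hNA_decomp K, Finset.range_eq_Ico]
      exact Finset.sum_le_sum_of_subset_of_nonneg
        (Finset.Ico_subset_Ico (Nat.zero_le 1) le_rfl)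
        (fun i _ _ => Finset.sum_nonneg fun j _ =>
          Set.indicator_nonneg (fun j' _ => w_nonneg j') j)
    have h5 : (CC α * m) * ∑ k' ∈ Finset.Ico 1 K, ∑ i ∈ blk m k', A.indicator (w α) i
        ≤ (CC α * m) * NA α A (K * m) :=
      mul_le_mul_of_nonneg_left h4 (mul_nonneg CC_pos.le hmr.le)
    rw [hSS_decomp K, ← hsplit]
    linarith
  -- frequently ff ≥ c
  have hSKm : Tendsto (fun K : ℕ => SS α (K * m)) atTop atTop :=
    (SS_tendsto hα).comp (tendsto_atTop_mono (fun K => Nat.le_mul_of_pos_right K hm)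
      tendsto_id)
  obtain ⟨K₀, hK₀⟩ := (hSKm.eventually_ge_atTop (2 * Tk α m 0)).exists_forall_of_atTop
  have hfreq : ∃ᶠ n in atTop, c ≤ ff α A n := by
    rw [frequently_atTop]
    intro N
    refine ⟨(max (max K₀ N) 1) * m, ?_, ?_⟩
    · calc N ≤ max (max K₀ N) 1 := le_trans (le_max_right K₀ N) (le_max_left _ 1)
        _ ≤ (max (max K₀ N) 1) * m := Nat.le_mul_of_pos_right _ hm
    · set K := max (max K₀ N) 1 with hK
      have hK1 : 1 ≤ K := le_max_right _ 1
      have hKK₀ : K₀ ≤ K := le_trans (le_max_left K₀ N) (le_max_left _ 1)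
      have hSb : 2 * Tk α m 0 ≤ SS α (K * m) := hK₀ K hKK₀
      have hSpos : 0 < SS α (K * m) := SS_pos (by nlinarith [hK1, hm] : 1 ≤ K * m)
      have hkey := key K hK1
      show c ≤ NA α A (K * m) / SS α (K * m)
      rw [le_div_iff₀ hSpos]
      have hT0 : 0 ≤ Tk α m 0 := Tk_nonneg m 0
      have h6 : SS α (K * m) / 2 ≤ (CC α * m) * NA α A (K * m) := by linarith
      have hCm : (0:ℝ) < CC α * m := mul_pos CC_pos hmr
      rw [hc]
      rw [div_mul_eq_mul_div, one_mul, div_le_iff₀ (mul_pos (mul_pos two_pos CC_pos) hmr : (0:ℝ) < 2 * CC α * m)]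
      calc SS α (K * m) = 2 * (SS α (K * m) / 2) := by ring
        _ ≤ 2 * ((CC α * m) * NA α A (K * m)) := by linarith
        _ = NA α A (K * m) * (2 * CC α * m) := by ring
  have hlim := le_limsup_of_frequently_le hfreq (bounded A)
  rw [← upperAlphaDensity_eq] at hlim
  intro h0
  rw [h0] at hlim
  linarith


lemma prime_dvd_prod_mem {s : Finset ℕ} (hs : ∀ p ∈ s, p.Prime) {q : ℕ} (hq : q.Prime)
    (hdvd : q ∣ ∏ p ∈ s, p) : q ∈ s := by
  obtain ⟨a, ha, hqa⟩ := (Prime.dvd_finset_prod_iff hq.prime id).mp hdvd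
  rwa [(Nat.prime_dvd_prime_iff_eq hq (hs a ha)).mp hqa]

lemma totient_prod_le (s : Finset ℕ) (hs : ∀ p ∈ s, p.Prime) :
    ((∏ p ∈ s, p).totient : ℝ)
      ≤ (∏ p ∈ s, p : ℕ) * Real.exp (-∑ p ∈ s, (1 / (p : ℝ))) := by
  induction s using Finset.induction_on with
  | empty => simp
  | @insert p s hp ih =>
    have hpp : p.Prime := hs p (Finset.mem_insert_self p s)
    have hs' : ∀ q ∈ s, q.Prime := fun q hq => hs q (Finset.mem_insert_of_mem hq)
    have hcop : Nat.Coprime p (∏ q ∈ s, q) :=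
      (Nat.Prime.coprime_iff_not_dvd hpp).mpr
        (fun hdvd => hp (prime_dvd_prod_mem hs' hpp hdvd))
    rw [Finset.prod_insert hp, Finset.sum_insert hp, Nat.totient_mul hcop,
        Nat.totient_prime hpp]
    have hM := ih hs'
    have hp1 : (1:ℝ) ≤ (p:ℝ) := by exact_mod_cast hpp.one_lt.le
    have hp0 : (0:ℝ) < (p:ℝ) := lt_of_lt_of_le one_pos hp1
    have hcast : (((p - 1) * (∏ q ∈ s, q).totient : ℕ) : ℝ)
        = ((p:ℝ) - 1) * ((∏ q ∈ s, q).totient : ℝ) := by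
      push_cast [Nat.cast_sub hpp.one_lt.le]; ring
    rw [hcast]
    have hexp : (p:ℝ) - 1 ≤ (p:ℝ) * Real.exp (-(1 / p)) := by
      have h := Real.add_one_le_exp (-(1 / (p:ℝ)))
      have h2 : (p:ℝ) * (-(1/(p:ℝ)) + 1) ≤ (p:ℝ) * Real.exp (-(1/p)) :=
        mul_le_mul_of_nonneg_left h hp0.le
      have h3 : (p:ℝ) * (-(1/(p:ℝ)) + 1) = (p:ℝ) - 1 := by
        field_simp; ring
      linarith
    calc ((p:ℝ) - 1) * ((∏ q ∈ s, q).totient : ℝ)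
        ≤ ((p:ℝ) - 1) * ((∏ q ∈ s, q : ℕ) * Real.exp (-∑ q ∈ s, (1/(q:ℝ)))) :=
          mul_le_mul_of_nonneg_left hM (by linarith)
      _ ≤ ((p:ℝ) * Real.exp (-(1/p)))
            * ((∏ q ∈ s, q : ℕ) * Real.exp (-∑ q ∈ s, (1/(q:ℝ)))) := by
          apply mul_le_mul_of_nonneg_right hexp
          positivity
      _ = ((p : ℝ) * (∏ q ∈ s, q : ℕ))
            * Real.exp (-(1 / (p:ℝ) + ∑ q ∈ s, (1/(q:ℝ)))) := by
          rw [neg_add, Real.exp_add]; ring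
      _ = _ := by push_cast; ring

lemma sum_primes_unbounded (L : ℝ) : ∃ N : ℕ, L ≤ ∑ p ∈ N.primesBelow, (1 / (p : ℝ)) := by
  have hnn : ∀ i : ℕ, 0 ≤ Set.indicator {p : ℕ | p.Prime} (fun n : ℕ => (1:ℝ)/n) i :=
    fun i => Set.indicator_nonneg (fun j _ => by positivity) i
  have ht := (not_summable_iff_tendsto_nat_atTop_of_nonneg hnn).mp
    not_summable_one_div_on_primes
  obtain ⟨N, hN⟩ := (ht.eventually_ge_atTop L).exists
  refine ⟨N, le_trans hN (le_of_eq ?_)⟩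
  rw [Finset.sum_indicator_eq_sum_filter]
  rfl

lemma small_totient {ε : ℝ} (hε : 0 < ε) :
    ∃ N : ℕ, ((∏ p ∈ N.primesBelow, p).totient : ℝ)
      ≤ ε * ((∏ p ∈ N.primesBelow, p : ℕ) : ℝ) := by
  obtain ⟨N, hN⟩ := sum_primes_unbounded (-Real.log ε)
  refine ⟨N, ?_⟩
  have hs : ∀ p ∈ N.primesBelow, p.Prime := fun p hp => Nat.prime_of_mem_primesBelow hp
  have h := totient_prod_le N.primesBelow hs
  have hexp : Real.exp (-∑ p ∈ N.primesBelow, (1/(p:ℝ))) ≤ ε := by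
    rw [← Real.exp_log hε]
    apply Real.exp_le_exp.mpr
    linarith
  have hm0 : (0:ℝ) ≤ ((∏ p ∈ N.primesBelow, p : ℕ) : ℝ) := Nat.cast_nonneg _
  calc ((∏ p ∈ N.primesBelow, p).totient : ℝ)
      ≤ (∏ p ∈ N.primesBelow, p : ℕ) * Real.exp (-∑ p ∈ N.primesBelow, (1/(p:ℝ))) := h
    _ ≤ (∏ p ∈ N.primesBelow, p : ℕ) * ε := mul_le_mul_of_nonneg_left hexp hm0
    _ = ε * _ := by ring

end Stmt12Aux

/-- For the sequence `x_1 = 1`, `x_n = 1/(least prime factor of n)`,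
the set `Λ_x(I_α)` of `I_α`-limit points is not closed: it contains `1/p` for every prime
`p` but does not contain `0`. -/
theorem stmt12 (α : ℝ) (hα : -1 ≤ α) (x : ℕ → ℝ) (hx1 : x 1 = 1)
    (hx : ∀ n : ℕ, 2 ≤ n → x n = 1 / (n.minFac : ℝ)) :
    ¬ IsClosed (idealLimitPoints (Ialpha α) x) ∧
    (∀ p : ℕ, p.Prime → (1 / (p : ℝ)) ∈ idealLimitPoints (Ialpha α) x) ∧
    (0 : ℝ) ∉ idealLimitPoints (Ialpha α) x := by
  classical
  have part2 : ∀ p : ℕ, p.Prime → (1 / (p : ℝ)) ∈ idealLimitPoints (Ialpha α) x := by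
    intro p hp
    set s := (p + 1).primesBelow with hsdef
    have hsp : ∀ q ∈ s, q.Prime := fun q hq => Nat.prime_of_mem_primesBelow hq
    set m := ∏ q ∈ s, q with hmdef
    have hps : p ∈ s := Nat.mem_primesBelow.mpr ⟨Nat.lt_succ_self p, hp⟩
    have hpm : p ∣ m := Finset.dvd_prod_of_mem _ hps
    have hm0 : 0 < m := Finset.prod_pos fun q hq => (hsp q hq).pos
    have hpm' : p ≤ m := Nat.le_of_dvd hm0 hpm
    set A : Set ℕ := {n | n % m = p % m ∧ p ≤ n} with hAdef
    have hxA : ∀ n ∈ A, x n = 1 / (p : ℝ) := by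
      intro n hn
      obtain ⟨hmod, hpn⟩ := hn
      have hdvd : m ∣ n - p := (Nat.modEq_iff_dvd' hpn).mp hmod.symm
      obtain ⟨c, hc⟩ := hdvd
      have hn_eq : n = m * c + p := by omega
      have h2n : 2 ≤ n := le_trans hp.two_le hpn
      have hminfac : n.minFac = p := by
        have hpn' : p ∣ n := by
          rw [hn_eq]; exact Nat.dvd_add (hpm.mul_right c) dvd_rfl
        have hle : n.minFac ≤ p := Nat.minFac_le_of_dvd hp.two_le hpn'
        have hq : (n.minFac).Prime := Nat.minFac_prime (by omega : n ≠ 1)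
        by_contra hne
        have hlt : n.minFac < p := lt_of_le_of_ne hle hne
        have hqs : n.minFac ∈ s := Nat.mem_primesBelow.mpr ⟨by omega, hq⟩
        have hqm : n.minFac ∣ m := Finset.dvd_prod_of_mem _ hqs
        have hqn : n.minFac ∣ n := Nat.minFac_dvd n
        have hqp : n.minFac ∣ p := by
          have h1 : n.minFac ∣ m * c := hqm.mul_right c
          exact (Nat.dvd_add_right h1).mp (hn_eq ▸ hqn)
        have : n.minFac = p := (Nat.prime_dvd_prime_iff_eq hq hp).mp hqp
        omega
      rw [hx n h2n, hminfac]
    have hconv : ConvergesAlong x A (1 / (p : ℝ)) := by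
      have hev : x =ᶠ[atTop ⊓ 𝓟 A] fun _ => 1 / (p : ℝ) :=
        eventually_inf_principal.mpr (Eventually.of_forall fun n hn => hxA n hn)
      exact Tendsto.congr' hev.symm tendsto_const_nhds
    refine ⟨A, fun hIA => ?_, hconv⟩
    have hmem : ∀ k, 1 ≤ k → ∃ i ∈ Stmt12Aux.blk m k, i ∈ A := by
      intro k hk
      have hp2 := hp.two_le
      refine ⟨k * m + p, ?_, ?_, ?_⟩
      · rw [Stmt12Aux.mem_blk]
        have h3 : (k + 1) * m = k * m + m := by ring
        exact ⟨by omega, by omega⟩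
      · show (k * m + p) % m = p % m
        rw [add_comm, mul_comm, Nat.add_mul_mod_self_left]
      · omega
    exact Stmt12Aux.lower_master hα hm0 A hmem hIA
  have part3 : (0 : ℝ) ∉ idealLimitPoints (Ialpha α) x := by
    rintro ⟨A, hA, hconv⟩
    apply hA
    show upperAlphaDensity α A = 0
    have hge := Stmt12Aux.upperAlphaDensity_nonneg (α := α) A
    have hle : upperAlphaDensity α A ≤ 0 := by
      apply Stmt12Aux.real_le_of_forall_pos_le_add
      intro ε hε
      rw [zero_add]
      set Cq : ℝ := Stmt12Aux.CC α * (1 + Stmt12Aux.CC α) with hCqdef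
      have hC := Stmt12Aux.CC_pos (α := α)
      have hCq0 : 0 < Cq := by nlinarith
      obtain ⟨N, hN⟩ := Stmt12Aux.small_totient (div_pos hε hCq0)
      set s := N.primesBelow with hsdef
      set m := ∏ q ∈ s, q with hmdef
      have hsp : ∀ q ∈ s, q.Prime := fun q hq => Nat.prime_of_mem_primesBelow hq
      have hm0 : 0 < m := Finset.prod_pos fun q hq => (hsp q hq).pos
      have hmr : (0 : ℝ) < (m : ℝ) := by exact_mod_cast hm0
      have hball : ∀ᶠ n in atTop ⊓ 𝓟 A, |x n| < 1 / ((N : ℝ) + 1) := by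
        have h := Metric.tendsto_nhds.mp hconv (1 / ((N : ℝ) + 1)) (by positivity)
        simpa [Real.dist_eq] using h
      rw [eventually_inf_principal] at hball
      obtain ⟨n₀, hn₀⟩ := eventually_atTop.mp hball
      have hcop : ∀ n, n₀ ≤ n → 2 ≤ n → n ∈ A → Nat.Coprime m n := by
        intro n h1 h2 h3
        have hlt := hn₀ n h1 h3
        rw [hx n h2] at hlt
        have hf0 : 0 < n.minFac := Nat.minFac_pos n
        have hf0' : (0 : ℝ) < (n.minFac : ℝ) := by exact_mod_cast hf0
        have habs : (1 : ℝ) / n.minFac < 1 / ((N : ℝ) + 1) := by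
          rwa [abs_of_pos (by positivity)] at hlt
        have hNf : (N : ℝ) + 1 < (n.minFac : ℝ) :=
          lt_of_one_div_lt_one_div (by positivity) habs
        have hNlt : N < n.minFac := by exact_mod_cast (by linarith : (N : ℝ) < n.minFac)
        by_contra hnc
        have hgpos : 0 < Nat.gcd m n := Nat.gcd_pos_of_pos_left n hm0
        have hg2 : 2 ≤ Nat.gcd m n := by
          rcases Nat.lt_or_ge (Nat.gcd m n) 2 with h | h
          · interval_cases h' : Nat.gcd m n <;> simp_all [Nat.Coprime]
          · exact h
        set q := (Nat.gcd m n).minFac with hqdef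
        have hq : q.Prime := Nat.minFac_prime (by omega)
        have hqm : q ∣ m := (Nat.minFac_dvd _).trans (Nat.gcd_dvd_left _ _)
        have hqn : q ∣ n := (Nat.minFac_dvd _).trans (Nat.gcd_dvd_right _ _)
        have hqs : q ∈ s := Stmt12Aux.prime_dvd_prod_mem hsp hq hqm
        have hqN : q < N := Nat.lt_of_mem_primesBelow hqs
        have hle' : n.minFac ≤ q := Nat.minFac_le_of_dvd hq.two_le hqn
        omega
      have hcard : ∀ k, n₀ + 2 ≤ k →
          ((Stmt12Aux.blk m k).filter (· ∈ A)).card ≤ m.totient := by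
        intro k hk
        have hsub : (Stmt12Aux.blk m k).filter (· ∈ A)
            ⊆ (Finset.Ico (k * m + 1) (k * m + 1 + m)).filter (m.Coprime ·) := by
          intro i hi
          rw [Finset.mem_filter, Stmt12Aux.mem_blk] at hi
          obtain ⟨⟨hi1, hi2⟩, hiA⟩ := hi
          have hkm : k ≤ k * m := Nat.le_mul_of_pos_right k hm0
          have h3 : (k + 1) * m = k * m + m := by ring
          rw [Finset.mem_filter, Finset.mem_Ico]
          exact ⟨⟨by omega, by omega⟩, hcop i (by omega) (by omega) hiA⟩
        calc ((Stmt12Aux.blk m k).filter (· ∈ A)).card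
            ≤ ((Finset.Ico (k * m + 1) (k * m + 1 + m)).filter (m.Coprime ·)).card :=
              Finset.card_le_card hsub
          _ = m.totient := Nat.filter_coprime_Ico_eq_totient m (k * m + 1)
      have hup := Stmt12Aux.upper_master hα hm0 (by omega : 1 ≤ n₀ + 2) A hcard
      calc upperAlphaDensity α A ≤ (m.totient : ℝ) / m * Cq := hup
        _ ≤ (ε / Cq) * Cq := by
            apply mul_le_mul_of_nonneg_right _ hCq0.le
            rw [div_le_iff₀ hmr]
            exact hN
        _ = ε := div_mul_cancel₀ ε hCq0.ne'
    linarith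
  refine ⟨?_, part2, part3⟩
  intro hcl
  apply part3
  rw [← hcl.closure_eq, Metric.mem_closure_iff]
  intro ε hε
  obtain ⟨p, hple, hp⟩ := Nat.exists_infinite_primes (⌈1 / ε⌉₊ + 1)
  refine ⟨1 / (p : ℝ), part2 p hp, ?_⟩
  have hp0 : (0 : ℝ) < (p : ℝ) := by exact_mod_cast hp.pos
  have h2 : 1 / ε < (p : ℝ) := by
    have := Nat.le_ceil (1 / ε)
    have hcast : ((⌈1 / ε⌉₊ + 1 : ℕ) : ℝ) ≤ (p : ℝ) := by exact_mod_cast hple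
    push_cast at hcast
    linarith
  have h3 : 1 / (p : ℝ) < ε := by
    rw [div_lt_iff₀ hp0]
    rw [div_lt_iff₀ hε] at h2
    linarith
  rw [Real.dist_eq]
  calc |0 - 1 / (p : ℝ)| = 1 / (p : ℝ) := by
        rw [zero_sub, abs_neg, abs_of_pos (by positivity)]
    _ < ε := h3
end
end

section
/- Let f : ℕ → (0,∞) be an eventually non-increasing function with ∑_{n≥1} f(n) = ∞ and let E_f := {S ⊆ ℕ : lim_n (∑_{i ∈ S∩[1,n]} f(i))/(∑_{i∈[1,n]} f(i)) = 0}. Then there exist a lower semicontinuous submeasure φ on ℕ with E_f = I_φ and a strictly increasing sequence of positive integers (z_n) such that lim_n (∑_{s ∈ (z_n, z_{n+1}]} f(s))/(∑_{s ∈ [1,z_n]} f(s)) = 1 and, for every S ⊆ ℕ, ‖S‖_φ = limsup_n (∑_{s ∈ S ∩ (z_n, z_{n+1}]} f(s))/(∑_{s ∈ [1, z_{n+1}]} f(s)). -/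
/-
Cut ℕ into blocks `(z_n, z_{n+1}]` on which the mass of `f` doubles: `z_{n+1}` is the first
index past `z_n` with `∑_{[1,z_{n+1}]} f ≥ 2 ∑_{[1,z_n]} f`. Since `f` is eventually bounded and
its partial sums diverge, the overshoot is `o(∑_{[1,z_n]} f)`, so each block carries
asymptotically as much mass as everything before it. Take `φ(S)` to be the supremum over `n`
of the share `r_n(S)` of `S` in the `n`-th block, relative to `∑_{[1,z_{n+1}]} f`; discarding
an initial segment of `S` only removes finitely many blocks, so `‖S‖_φ = limsup r_n(S)`.

For `E_f = I_φ`, let `u_k` be the density of `S` up to `z_k`. Then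
`r_k ≤ u_{k+1} ≤ u_k / 2 + r_k`, so `u_k → 0` exactly when `r_k → 0`. Between consecutive
`z_k` the density moves by a bounded factor, since `∑_{[1,z_{k+1}]} f ≤ 3 ∑_{[1,z_k]} f`
eventually.
-/

open Filter Topology MeasureTheory Set

noncomputable section

lemma ENNReal.limsup_eq_zero_iff_tendsto {α : Type*} {l : Filter α} [l.NeBot] {u : α → ENNReal} :
    limsup u l = 0 ↔ Tendsto u l (𝓝 0) :=
  ⟨fun h => tendsto_of_le_liminf_of_limsup_le bot_le h.le, Tendsto.limsup_eq⟩

lemma ENNReal.tendsto_ofReal_zero_iff {α : Type*} {l : Filter α} {r : α → ℝ} (hr : ∀ a, 0 ≤ r a) :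
    Tendsto (fun a => ENNReal.ofReal (r a)) l (𝓝 0) ↔ Tendsto r l (𝓝 0) := by
  refine ⟨fun h => ?_, fun h => by simpa using ENNReal.tendsto_ofReal h⟩
  simpa [Function.comp_def, ENNReal.toReal_ofReal (hr _)] using
    (ENNReal.tendsto_toReal ENNReal.zero_ne_top).comp h

lemma tendsto_zero_of_le_half_add {u r : ℕ → ℝ} (hu₀ : ∀ n, 0 ≤ u n) (hu₁ : ∀ n, u n ≤ 1)
    (hrec : ∀ n, u (n + 1) ≤ u n / 2 + r n) (hr : Tendsto r atTop (𝓝 0)) :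
    Tendsto u atTop (𝓝 0) := by
  set U : ℕ → ENNReal := fun n => ENNReal.ofReal (u n)
  have hrec' : ∀ n, U (n + 1) ≤ U n * 2⁻¹ + ENNReal.ofReal (r n) := fun n => calc
    U (n + 1) ≤ ENNReal.ofReal (u n / 2) + ENNReal.ofReal (r n) :=
        (ENNReal.ofReal_le_ofReal (hrec n)).trans ENNReal.ofReal_add_le
    _ = U n * 2⁻¹ + ENNReal.ofReal (r n) := by
        rw [ENNReal.ofReal_div_of_pos two_pos, ENNReal.ofReal_ofNat, div_eq_mul_inv]
  have hhalf : limsup U atTop ≤ limsup U atTop / 2 := calc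
    limsup U atTop = limsup (fun n => U (n + 1)) atTop := (limsup_nat_add U 1).symm
    _ ≤ limsup (fun n => U n * 2⁻¹ + ENNReal.ofReal (r n)) atTop :=
        limsup_le_limsup (Eventually.of_forall hrec')
    _ = limsup U atTop / 2 := by
        rw [← Pi.add_def, ENNReal.limsup_add_of_right_tendsto_zero
          (by simpa using ENNReal.tendsto_ofReal hr), ENNReal.limsup_mul_const_of_ne_top
          (ENNReal.inv_ne_top.2 two_ne_zero), div_eq_mul_inv, mul_comm]
  have hfin : limsup U atTop ≠ ⊤ :=
    ne_top_of_le_ne_top ENNReal.one_ne_top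
      (limsup_le_of_le (by isBoundedDefault) (Eventually.of_forall fun n =>
        ENNReal.ofReal_le_one.2 (hu₁ n)))
  have hzero : limsup U atTop = 0 := by
    by_contra hne
    exact (ENNReal.half_lt_self hne hfin).not_ge hhalf
  exact (ENNReal.tendsto_ofReal_zero_iff hu₀).1
    (ENNReal.limsup_eq_zero_iff_tendsto.1 hzero)

lemma tendsto_div_of_tendsto_sub_div {A G : ℕ → ℝ} (hA₀ : ∀ k, 0 ≤ A k) (hAG : ∀ k, A k ≤ G k)
    (hG : ∀ k, 0 < G k) (hG₂ : ∀ k, 2 * G k ≤ G (k + 1))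
    (h : Tendsto (fun k => (A (k + 1) - A k) / G (k + 1)) atTop (𝓝 0)) :
    Tendsto (fun k => A k / G k) atTop (𝓝 0) := by
  refine tendsto_zero_of_le_half_add (fun k => div_nonneg (hA₀ k) (hG k).le)
    (fun k => div_le_one_of_le₀ (hAG k) (hG k).le) (fun k => ?_) h
  calc A (k + 1) / G (k + 1) = A k / G (k + 1) + (A (k + 1) - A k) / G (k + 1) := by ring
    _ ≤ A k / (2 * G k) + (A (k + 1) - A k) / G (k + 1) := by
        gcongr
        · exact hA₀ k
        · exact mul_pos two_pos (hG k)
        · exact hG₂ k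
    _ = A k / G k / 2 + (A (k + 1) - A k) / G (k + 1) := by ring

lemma tendsto_div_of_tendsto_div_comp {a F : ℕ → ℝ} {z : ℕ → ℕ} {C : ℝ} (hz : StrictMono z)
    (ha : Monotone a) (ha₀ : ∀ n, 0 ≤ a n) (hF : Monotone F) (hFz : ∀ k, 0 < F (z k))
    (hC : ∀ᶠ k in atTop, F (z (k + 1)) ≤ C * F (z k))
    (h : Tendsto (fun k => a (z k) / F (z k)) atTop (𝓝 0)) :
    Tendsto (fun n => a n / F n) atTop (𝓝 0) := by
  refine tendsto_order.2 ⟨fun ε hε => ?_, fun ε hε => ?_⟩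
  · filter_upwards [eventually_ge_atTop (z 0)] with n hn
    exact hε.trans_le (div_nonneg (ha₀ n) ((hFz 0).trans_le (hF hn)).le)
  have hsucc : Tendsto (fun k => C * (a (z (k + 1)) / F (z (k + 1)))) atTop (𝓝 0) := by
    simpa using (h.comp (tendsto_add_atTop_nat 1)).const_mul C
  obtain ⟨K, hK⟩ := eventually_atTop.1 (hC.and (hsucc.eventually (gt_mem_nhds hε)))
  filter_upwards [eventually_gt_atTop (z K)] with n hn
  have hzK : StrictMono fun j => z (K + j) := hz.comp (add_right_strictMono (a := K))
  obtain ⟨j, hj₁, hj₂⟩ := hzK.exists_between_of_tendsto_atTop hzK.tendsto_atTop hn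
  obtain ⟨hCk, hεk⟩ := hK (K + j) le_self_add
  have hP := hFz (K + j)
  have hQ := hFz (K + j + 1)
  calc a n / F n ≤ a (z (K + j + 1)) / F (z (K + j)) :=
        div_le_div₀ (ha₀ _) (ha hj₂) hP (hF hj₁.le)
    _ ≤ C * (a (z (K + j + 1)) / F (z (K + j + 1))) := by
        rw [div_le_iff₀ hP, mul_div_assoc', div_mul_eq_mul_div, le_div_iff₀ hQ]
        nlinarith [ha₀ (z (K + j + 1))]
    _ < ε := hεk

namespace ErdosUlam

open Finset

def partialSum (f : ℕ → ℝ) (n : ℕ) : ℝ := ∑ i ∈ Icc 1 n, f i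

variable {f : ℕ → ℝ}

lemma partialSum_add_sum_Ioc {a b : ℕ} (hab : a ≤ b) :
    partialSum f a + ∑ i ∈ Ioc a b, f i = partialSum f b :=
  sum_Ioc_consecutive f (Nat.zero_le a) hab

lemma partialSum_succ (n : ℕ) : partialSum f (n + 1) = partialSum f n + f (n + 1) :=
  sum_Ioc_succ_top n.zero_le f

lemma partialSum_nonneg (hf : ∀ n, 0 ≤ f n) (n : ℕ) : 0 ≤ partialSum f n :=
  sum_nonneg fun i _ => hf i

lemma partialSum_mono (hf : ∀ n, 0 ≤ f n) : Monotone (partialSum f) := fun _ _ hab =>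
  sum_le_sum_of_subset_of_nonneg (Icc_subset_Icc le_rfl hab) fun i _ _ => hf i

lemma partialSum_pos (hf : ∀ n, 0 < f n) {n : ℕ} (hn : 0 < n) : 0 < partialSum f n :=
  sum_pos (fun i _ => hf i) ⟨n, mem_Icc.2 ⟨hn, le_rfl⟩⟩

lemma sum_range_succ_eq_add_partialSum (n : ℕ) :
    ∑ i ∈ range (n + 1), f i = f 0 + partialSum f n := by
  rw [range_eq_Ico, sum_eq_sum_Ico_succ_bot n.succ_pos]
  rfl

lemma tendsto_partialSum_atTop (hf : ∀ n, 0 ≤ f n) (hdiv : ¬ Summable f) :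
    Tendsto (partialSum f) atTop atTop := by
  have h := ((not_summable_iff_tendsto_nat_atTop_of_nonneg hf).1 hdiv).comp
    (tendsto_add_atTop_nat 1)
  simp only [Function.comp_def, sum_range_succ_eq_add_partialSum] at h
  simpa using tendsto_atTop_add_const_left atTop (-f 0) h

def blockRatio (f : ℕ → ℝ) (z : ℕ → ℕ) (S : Set ℕ) (n : ℕ) : ℝ :=
  (∑ s ∈ Ioc (z n) (z (n + 1)), S.indicator f s) / ∑ s ∈ Icc 1 (z (n + 1)), f s

section blockRatio

variable {z : ℕ → ℕ} {S T : Set ℕ} {n : ℕ}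

lemma blockRatio_nonneg (hf : ∀ n, 0 ≤ f n) : 0 ≤ blockRatio f z S n :=
  div_nonneg (sum_nonneg fun _ _ => Set.indicator_nonneg (fun i _ => hf i) _)
    (sum_nonneg fun i _ => hf i)

lemma blockRatio_le_one (hf : ∀ n, 0 ≤ f n) : blockRatio f z S n ≤ 1 := by
  refine div_le_one_of_le₀ ?_ (sum_nonneg fun i _ => hf i)
  calc ∑ s ∈ Ioc (z n) (z (n + 1)), S.indicator f s ≤ ∑ s ∈ Ioc (z n) (z (n + 1)), f s :=
        sum_le_sum fun i _ => Set.indicator_le_self' (fun i _ => hf i) i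
    _ ≤ ∑ s ∈ Icc 1 (z (n + 1)), f s :=
        sum_le_sum_of_subset_of_nonneg (Ioc_subset_Ioc (Nat.zero_le _) le_rfl)
          fun i _ _ => hf i

lemma blockRatio_mono (hf : ∀ n, 0 ≤ f n) (hST : S ⊆ T) :
    blockRatio f z S n ≤ blockRatio f z T n :=
  div_le_div_of_nonneg_right
    (sum_le_sum fun i _ => Set.indicator_le_indicator_of_subset hST (fun i => hf i) i)
    (sum_nonneg fun i _ => hf i)

lemma blockRatio_union_le (hf : ∀ n, 0 ≤ f n) :
    blockRatio f z (S ∪ T) n ≤ blockRatio f z S n + blockRatio f z T n := by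
  rw [blockRatio, blockRatio, blockRatio, ← add_div, ← sum_add_distrib]
  refine div_le_div_of_nonneg_right (sum_le_sum fun i _ => ?_) (sum_nonneg fun i _ => hf i)
  by_cases hS : i ∈ S <;> by_cases hT : i ∈ T <;> simp [hS, hT, hf i]

lemma blockRatio_congr (h : ∀ s, z n < s → s ≤ z (n + 1) → (s ∈ S ↔ s ∈ T)) :
    blockRatio f z S n = blockRatio f z T n := by
  rw [blockRatio, blockRatio]
  congr 1
  refine sum_congr rfl fun s hs => ?_
  have hST := h s (mem_Ioc.1 hs).1 (mem_Ioc.1 hs).2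
  by_cases hS : s ∈ S
  · rw [Set.indicator_of_mem hS, Set.indicator_of_mem (hST.1 hS)]
  · rw [Set.indicator_of_notMem hS, Set.indicator_of_notMem (mt hST.2 hS)]

@[simp] lemma blockRatio_empty : blockRatio f z ∅ n = 0 := by
  simp [blockRatio]

end blockRatio

section blockSubmeasure

variable {z : ℕ → ℕ}

lemma tendsto_iSup_blockRatio_inter_Iio (hf : ∀ n, 0 ≤ f n) (A : Set ℕ) :
    Tendsto (fun m => ⨆ n, ENNReal.ofReal (blockRatio f z (A ∩ {k | k < m}) n)) atTop
      (𝓝 (⨆ n, ENNReal.ofReal (blockRatio f z A n))) := by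
  have hmono : Monotone fun m => ⨆ n, ENNReal.ofReal (blockRatio f z (A ∩ {k | k < m}) n) :=
    fun a b hab => iSup_mono fun n => ENNReal.ofReal_le_ofReal
      (blockRatio_mono hf (Set.inter_subset_inter_right _ fun k hk => lt_of_lt_of_le hk hab))
  have hsup : (⨆ m, ⨆ n, ENNReal.ofReal (blockRatio f z (A ∩ {k | k < m}) n)) =
      ⨆ n, ENNReal.ofReal (blockRatio f z A n) := by
    refine le_antisymm (iSup_le fun m => iSup_mono fun n => ENNReal.ofReal_le_ofReal
      (blockRatio_mono hf Set.inter_subset_left)) (iSup_le fun n => ?_)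
    have hblock : blockRatio f z A n = blockRatio f z (A ∩ {k | k < z (n + 1) + 1}) n :=
      blockRatio_congr fun s _ hs => ⟨fun h => ⟨h, Nat.lt_succ_of_le hs⟩, And.left⟩
    rw [hblock]
    exact le_iSup₂_of_le (z (n + 1) + 1) n le_rfl
  rw [← hsup]
  exact tendsto_atTop_iSup hmono

def blockSubmeasure (f : ℕ → ℝ) (z : ℕ → ℕ) (hf : ∀ n, 0 ≤ f n) : LSCSubmeasure where
  toFun S := ⨆ n, ENNReal.ofReal (blockRatio f z S n)
  empty' := by simp
  singleton_lt_top' _ :=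
    (iSup_le fun _ => ENNReal.ofReal_le_one.2 (blockRatio_le_one hf)).trans_lt
      ENNReal.one_lt_top
  mono' _ _ hAB := iSup_mono fun _ => ENNReal.ofReal_le_ofReal (blockRatio_mono hf hAB)
  subadd' A B := iSup_le fun n =>
    calc ENNReal.ofReal (blockRatio f z (A ∪ B) n)
        ≤ ENNReal.ofReal (blockRatio f z A n) + ENNReal.ofReal (blockRatio f z B n) :=
          (ENNReal.ofReal_le_ofReal (blockRatio_union_le hf)).trans ENNReal.ofReal_add_le
      _ ≤ _ := add_le_add (le_iSup (fun n => ENNReal.ofReal (blockRatio f z A n)) n)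
          (le_iSup (fun n => ENNReal.ofReal (blockRatio f z B n)) n)
  lsc' := tendsto_iSup_blockRatio_inter_Iio hf

lemma blockSubmeasure_norm_eq_limsup (hf : ∀ n, 0 ≤ f n) (hz : StrictMono z) (S : Set ℕ) :
    (blockSubmeasure f z hf).norm S =
      limsup (fun n => ENNReal.ofReal (blockRatio f z S n)) atTop := by
  rw [limsup_eq_iInf_iSup_of_nat]
  refine le_antisymm (le_iInf fun N => iInf_le_of_le (z N + 1) (iSup_le fun n => ?_))
    (le_iInf fun m => iInf_le_of_le m (iSup₂_le fun n hn => ?_))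
  · by_cases hn : N ≤ n
    · exact le_iSup₂_of_le n hn
        (ENNReal.ofReal_le_ofReal (blockRatio_mono hf Set.sdiff_subset))
    · have hzn : z (n + 1) ≤ z N := hz.monotone (Nat.succ_le_of_lt (not_le.1 hn))
      have hempty : blockRatio f z (S \ {k | k < z N + 1}) n = blockRatio f z ∅ n :=
        blockRatio_congr fun s _ hs => iff_of_false (fun h => h.2 (show s < z N + 1 by omega)) id
      rw [hempty, blockRatio_empty, ENNReal.ofReal_zero]
      exact bot_le
  · have htail : blockRatio f z S n = blockRatio f z (S \ {k | k < m}) n :=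
      blockRatio_congr fun s hs _ =>
        ⟨fun h => ⟨h, not_lt.2 (hn.le.trans (hz.le_apply.trans hs.le))⟩, And.left⟩
    rw [htail]
    exact le_iSup_of_le n le_rfl

end blockSubmeasure

section ideal

variable {z : ℕ → ℕ}

lemma mem_blockSubmeasure_ideal_iff (hf : ∀ n, 0 ≤ f n) (hz : StrictMono z) (S : Set ℕ) :
    S ∈ (blockSubmeasure f z hf).ideal ↔ Tendsto (blockRatio f z S) atTop (𝓝 0) := by
  rw [← ENNReal.tendsto_ofReal_zero_iff fun _ => blockRatio_nonneg hf,
    ← ENNReal.limsup_eq_zero_iff_tendsto, ← blockSubmeasure_norm_eq_limsup hf hz]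
  rfl

lemma blockSubmeasure_norm_eq_ofReal_limsup (hf : ∀ n, 0 ≤ f n) (hz : StrictMono z)
    (S : Set ℕ) :
    (blockSubmeasure f z hf).norm S = ENNReal.ofReal (limsup (blockRatio f z S) atTop) := by
  rw [blockSubmeasure_norm_eq_limsup hf hz, ENNReal.ofReal_limsup
    (isCoboundedUnder_le_of_le atTop fun _ => blockRatio_nonneg hf)
    (isBoundedUnder_of ⟨1, fun _ => blockRatio_le_one hf⟩)]

lemma blockRatio_eq_sub_div (hz : Monotone z) (S : Set ℕ) (n : ℕ) :
    blockRatio f z S n = (partialSum (S.indicator f) (z (n + 1)) -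
      partialSum (S.indicator f) (z n)) / partialSum f (z (n + 1)) := by
  rw [← partialSum_add_sum_Ioc (hz n.le_succ), add_sub_cancel_left]
  rfl

lemma mem_erdosUlamIdeal_iff_tendsto_blockRatio {C : ℝ} (hf : ∀ n, 0 < f n) (hz : StrictMono z)
    (hz₀ : 0 < z 0) (hz₂ : ∀ k, 2 * partialSum f (z k) ≤ partialSum f (z (k + 1)))
    (hC : ∀ᶠ k in atTop, partialSum f (z (k + 1)) ≤ C * partialSum f (z k)) (S : Set ℕ) :
    S ∈ ErdosUlamIdeal f ↔ Tendsto (blockRatio f z S) atTop (𝓝 0) := by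
  have hf₀ : ∀ n, 0 ≤ f n := fun n => (hf n).le
  have hS₀ : ∀ n, 0 ≤ S.indicator f n := Set.indicator_nonneg fun n _ => hf₀ n
  have hSf : ∀ n, partialSum (S.indicator f) n ≤ partialSum f n := fun n =>
    sum_le_sum fun i _ => Set.indicator_le_self' (fun i _ => hf₀ i) i
  have hFz : ∀ k, 0 < partialSum f (z k) := fun k =>
    partialSum_pos hf (hz₀.trans_le (hz.monotone k.zero_le))
  change Tendsto (fun n => partialSum (S.indicator f) n / partialSum f n) atTop (𝓝 0) ↔ _
  have hblocks : Tendsto (fun k => partialSum (S.indicator f) (z k) / partialSum f (z k))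
      atTop (𝓝 0) ↔ Tendsto (blockRatio f z S) atTop (𝓝 0) := by
    rw [funext (blockRatio_eq_sub_div (f := f) hz.monotone S)]
    refine ⟨fun h => ?_, tendsto_div_of_tendsto_sub_div
      (A := fun k => partialSum (S.indicator f) (z k)) (G := fun k => partialSum f (z k))
      (fun k => partialSum_nonneg hS₀ _) (fun k => hSf _) hFz hz₂⟩
    refine squeeze_zero (fun k => div_nonneg (sub_nonneg.2 ?_) (hFz _).le) (fun k => ?_)
      (h.comp (tendsto_add_atTop_nat 1))
    · exact partialSum_mono hS₀ (hz.monotone k.le_succ)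
    · exact div_le_div_of_nonneg_right (sub_le_self _ (partialSum_nonneg hS₀ _))
        (hFz _).le
  rw [← hblocks]
  exact ⟨fun h => h.comp hz.tendsto_atTop, tendsto_div_of_tendsto_div_comp hz
    (partialSum_mono hS₀) (partialSum_nonneg hS₀) (partialSum_mono hf₀) hFz hC⟩

end ideal

lemma exists_lt_two_mul_partialSum_le (hF : Tendsto (partialSum f) atTop atTop) (p : ℕ) :
    ∃ m, p < m ∧ 2 * partialSum f p ≤ partialSum f m :=
  ((eventually_gt_atTop p).and (hF.eventually_ge_atTop _)).exists

def doublingSeq (f : ℕ → ℝ) (hF : Tendsto (partialSum f) atTop atTop) : ℕ → ℕ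
  | 0 => 1
  | n + 1 => Nat.find (exists_lt_two_mul_partialSum_le hF (doublingSeq f hF n))

section doublingSeq

variable (hF : Tendsto (partialSum f) atTop atTop)

lemma doublingSeq_succ_spec (n : ℕ) : doublingSeq f hF n < doublingSeq f hF (n + 1) ∧
    2 * partialSum f (doublingSeq f hF n) ≤ partialSum f (doublingSeq f hF (n + 1)) :=
  Nat.find_spec (exists_lt_two_mul_partialSum_le hF _)

lemma doublingSeq_strictMono : StrictMono (doublingSeq f hF) :=
  strictMono_nat_of_lt_succ fun n => (doublingSeq_succ_spec hF n).1

lemma doublingSeq_pos (n : ℕ) : 0 < doublingSeq f hF n :=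
  Nat.one_pos.trans_le ((doublingSeq_strictMono hF).monotone n.zero_le)

lemma partialSum_lt_of_lt_doublingSeq_succ (hf : ∀ n, 0 < f n) {n m : ℕ}
    (hm : m < doublingSeq f hF (n + 1)) :
    partialSum f m < 2 * partialSum f (doublingSeq f hF n) := by
  have hpos := partialSum_pos hf (doublingSeq_pos hF n)
  by_cases hmn : doublingSeq f hF n < m
  · exact not_le.1 fun h => Nat.find_min (exists_lt_two_mul_partialSum_le hF _) hm ⟨hmn, h⟩
  · linarith [partialSum_mono (fun n => (hf n).le) (not_lt.1 hmn)]

lemma partialSum_doublingSeq_succ_lt (hf : ∀ n, 0 < f n) (n : ℕ) :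
    partialSum f (doublingSeq f hF (n + 1)) <
      2 * partialSum f (doublingSeq f hF n) + f (doublingSeq f hF (n + 1)) := by
  obtain ⟨m, hm⟩ := Nat.exists_eq_add_one_of_ne_zero (doublingSeq_pos hF (n + 1)).ne'
  rw [hm, partialSum_succ]
  exact add_lt_add_of_lt_of_le
    (partialSum_lt_of_lt_doublingSeq_succ hF hf (hm ▸ m.lt_succ_self)) le_rfl

lemma tendsto_sum_Ioc_doublingSeq_div (hf : ∀ n, 0 < f n) {C : ℝ} (hC : ∀ᶠ n in atTop, f n ≤ C) :
    Tendsto (fun n => (∑ s ∈ Ioc (doublingSeq f hF n) (doublingSeq f hF (n + 1)), f s) /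
      partialSum f (doublingSeq f hF n)) atTop (𝓝 1) := by
  set z := doublingSeq f hF
  have hz := doublingSeq_strictMono hF
  have hFz : ∀ n, 0 < partialSum f (z n) := fun n => partialSum_pos hf (doublingSeq_pos hF n)
  have hblock : ∀ n, ∑ s ∈ Ioc (z n) (z (n + 1)), f s =
      partialSum f (z (n + 1)) - partialSum f (z n) := fun n => by
    rw [← partialSum_add_sum_Ioc (hz.monotone n.le_succ), add_sub_cancel_left]
  have hsmall : Tendsto (fun n => C / partialSum f (z n)) atTop (𝓝 0) :=
    tendsto_const_nhds.div_atTop (hF.comp hz.tendsto_atTop)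
  refine tendsto_of_tendsto_of_tendsto_of_le_of_le' tendsto_const_nhds
    (by simpa using hsmall.const_add 1) (Eventually.of_forall fun n => ?_) ?_
  · rw [hblock, le_div_iff₀ (hFz n)]
    linarith [(doublingSeq_succ_spec hF n).2]
  · filter_upwards [(hz.tendsto_atTop.comp (tendsto_add_atTop_nat 1)).eventually hC] with n hfC
    rw [hblock, div_le_iff₀ (hFz n), add_mul, div_mul_cancel₀ _ (hFz n).ne']
    linarith [partialSum_doublingSeq_succ_lt hF hf n, show f (z (n + 1)) ≤ C from hfC]

lemma eventually_partialSum_doublingSeq_succ_le (hf : ∀ n, 0 < f n) {C : ℝ}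
    (hC : ∀ᶠ n in atTop, f n ≤ C) :
    ∀ᶠ n in atTop, partialSum f (doublingSeq f hF (n + 1)) ≤
      3 * partialSum f (doublingSeq f hF n) := by
  filter_upwards [(tendsto_sum_Ioc_doublingSeq_div hF hf hC).eventually
    (gt_mem_nhds one_lt_two)] with n hn
  have hFz := partialSum_pos hf (doublingSeq_pos hF n)
  rw [div_lt_iff₀ hFz] at hn
  linarith [partialSum_add_sum_Ioc (f := f) (doublingSeq_succ_spec hF n).1.le]

end doublingSeq

end ErdosUlam

/-- For an eventually non-increasing `f : ℕ → (0,∞)` with divergent sum,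
there are a lower semicontinuous submeasure `φ` with `E_f = I_φ` and a strictly increasing
sequence of positive integers `(z_n)` such that
`lim_n (∑_{s ∈ (z_n, z_{n+1}]} f(s))/(∑_{s ∈ [1,z_n]} f(s)) = 1` and, for all `S ⊆ ℕ`,
`‖S‖_φ = limsup_n (∑_{s ∈ S ∩ (z_n, z_{n+1}]} f(s))/(∑_{s ∈ [1,z_{n+1}]} f(s))`. -/
theorem stmt14 (f : ℕ → ℝ) (hpos : ∀ n, 0 < f n)
    (hmono : ∃ N : ℕ, ∀ m n : ℕ, N ≤ m → m ≤ n → f n ≤ f m)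
    (hdiv : ¬ Summable f) :
    ∃ (φ : LSCSubmeasure) (z : ℕ → ℕ), StrictMono z ∧ (∀ n, 0 < z n) ∧
      φ.ideal = ErdosUlamIdeal f ∧
      Tendsto (fun n => (∑ s ∈ Finset.Ioc (z n) (z (n + 1)), f s) /
        (∑ s ∈ Finset.Icc 1 (z n), f s)) atTop (𝓝 1) ∧
      ∀ S : Set ℕ, φ.norm S = ENNReal.ofReal (limsup (fun n =>
        (∑ s ∈ Finset.Ioc (z n) (z (n + 1)), S.indicator f s) /
        (∑ s ∈ Finset.Icc 1 (z (n + 1)), f s)) atTop) := by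
  open ErdosUlam in
  have hf₀ : ∀ n, 0 ≤ f n := fun n => (hpos n).le
  have hF := tendsto_partialSum_atTop hf₀ hdiv
  have hz := doublingSeq_strictMono hF
  obtain ⟨N, hN⟩ := hmono
  have hbdd : ∀ᶠ n in atTop, f n ≤ f N := eventually_atTop.2 ⟨N, fun n => hN N n le_rfl⟩
  refine ⟨blockSubmeasure f (doublingSeq f hF) hf₀, doublingSeq f hF, hz, doublingSeq_pos hF,
    ?_, tendsto_sum_Ioc_doublingSeq_div hF hpos hbdd,
    blockSubmeasure_norm_eq_ofReal_limsup hf₀ hz⟩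
  ext S
  rw [mem_blockSubmeasure_ideal_iff hf₀ hz, mem_erdosUlamIdeal_iff_tendsto_blockRatio hpos hz
    (doublingSeq_pos hF 0) (fun k => (doublingSeq_succ_spec hF k).2)
    (eventually_partialSum_doublingSeq_succ_le hF hpos hbdd)]
end
end

section
/- Let f : ℕ → (0,∞) be an eventually non-increasing function with ∑_{n≥1} f(n) = ∞, let x be a sequence taking values in a metric space, and let E_f := {S ⊆ ℕ : lim_n (∑_{i ∈ S∩[1,n]} f(i))/(∑_{i∈[1,n]} f(i)) = 0} be the associated Erdős–Ulam ideal. Then the set Λ_x(E_f) of E_f-limit points of x is an F_σ subset of the metric space. -/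
open Filter Topology MeasureTheory Set

noncomputable section

/-!
Write `d_n(S)` for the ratio in the definition of `E_f`. Since the partial sums of `f`
diverge, changing `S` on an initial segment does not affect `limsup d_n(S)`, so `S ∉ E_f` iff
`d_n(S) ≥ q` infinitely often for some `q > 0`. Hence `ℓ ∈ Λ_x(E_f)` iff for some `q > 0` every
closed ball `B(ℓ, ε)` satisfies `d_n(x⁻¹ B(ℓ, ε)) ≥ q` infinitely often: given such `ℓ`, a
diagonal set `A` that uses the ball of radius `1/(j+1)` on a block `(n_j, n_{j+1}]` so long that
the earlier blocks carry at most weight `q/2` still has `d_{n_{j+1}}(A) ≥ q/2`. For fixed `q`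
this condition defines a closed set, by monotonicity of `d_n` and the triangle inequality.
-/

namespace ErdosUlam

variable (f : ℕ → ℝ)

def weight (n : ℕ) : ℝ := ∑ i ∈ Finset.Icc 1 n, f i

def density (S : Set ℕ) (n : ℕ) : ℝ := (∑ i ∈ Finset.Icc 1 n, S.indicator f i) / weight f n

variable {f}

theorem mem_erdosUlamIdeal_iff (S : Set ℕ) :
    S ∈ ErdosUlamIdeal f ↔ Tendsto (density f S) atTop (𝓝 0) := Iff.rfl

theorem weight_nonneg (hf : ∀ n, 0 ≤ f n) (n : ℕ) : 0 ≤ weight f n :=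
  Finset.sum_nonneg fun i _ => hf i

theorem density_nonneg (hf : ∀ n, 0 ≤ f n) (S : Set ℕ) (n : ℕ) : 0 ≤ density f S n :=
  div_nonneg (Finset.sum_nonneg fun i _ => indicator_nonneg (fun j _ => hf j) i)
    (weight_nonneg hf n)

theorem density_mono (hf : ∀ n, 0 ≤ f n) {S T : Set ℕ} (hST : S ⊆ T) (n : ℕ) :
    density f S n ≤ density f T n :=
  div_le_div_of_nonneg_right
    (Finset.sum_le_sum fun i _ => indicator_le_indicator_of_subset hST hf i)
    (weight_nonneg hf n)

theorem tendsto_weight_atTop (hf : ∀ n, 0 ≤ f n) (hdiv : ¬ Summable f) :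
    Tendsto (weight f) atTop atTop := by
  have hshift : ¬ Summable (fun i => f (i + 1)) := fun h => hdiv ((summable_nat_add_iff 1).1 h)
  have hweight : weight f = fun n => ∑ i ∈ Finset.range n, f (i + 1) := by
    funext n
    rw [weight, ← Finset.Ico_add_one_right_eq_Icc, Finset.sum_Ico_eq_sum_range]
    simp [add_comm]
  rw [hweight]
  exact (not_summable_iff_tendsto_nat_atTop_of_nonneg fun i => hf _).1 hshift

theorem tendsto_weight_div_weight (hf : ∀ n, 0 ≤ f n) (hdiv : ¬ Summable f) (p : ℕ) :
    Tendsto (fun n => weight f p / weight f n) atTop (𝓝 0) :=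
  tendsto_const_nhds.div_atTop (tendsto_weight_atTop hf hdiv)

theorem density_le_add (hf : ∀ n, 0 ≤ f n) {S T : Set ℕ} {p n : ℕ} (hpn : p ≤ n)
    (hST : ∀ i, p < i → i ≤ n → i ∈ S → i ∈ T) :
    density f S n ≤ weight f p / weight f n + density f T n := by
  rw [density, density, ← add_div]
  refine div_le_div_of_nonneg_right ?_ (weight_nonneg hf n)
  have hsplit := Finset.sum_Ioc_consecutive (S.indicator f) (Nat.zero_le p) hpn
  have hhead : ∑ i ∈ Finset.Ioc 0 p, S.indicator f i ≤ weight f p :=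
    Finset.sum_le_sum fun i _ => indicator_le_self' (fun j _ => hf j) i
  have htail : ∑ i ∈ Finset.Ioc p n, S.indicator f i ≤ ∑ i ∈ Finset.Ioc p n, T.indicator f i := by
    refine Finset.sum_le_sum fun i hi => ?_
    rw [Finset.mem_Ioc] at hi
    by_cases hiS : i ∈ S
    · rw [indicator_of_mem hiS, indicator_of_mem (hST i hi.1 hi.2 hiS)]
    · rw [indicator_of_notMem hiS]
      exact indicator_nonneg (fun j _ => hf j) i
  have hT : ∑ i ∈ Finset.Ioc p n, T.indicator f i ≤ ∑ i ∈ Finset.Ioc 0 n, T.indicator f i :=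
    Finset.sum_le_sum_of_subset_of_nonneg (Finset.Ioc_subset_Ioc (Nat.zero_le p) le_rfl)
      fun i _ _ => indicator_nonneg (fun j _ => hf j) i
  -- `Finset.Icc 1 n` and `Finset.Ioc 0 n` are definitionally equal on `ℕ`
  change ∑ i ∈ Finset.Ioc 0 n, S.indicator f i ≤
    weight f p + ∑ i ∈ Finset.Ioc 0 n, T.indicator f i
  linarith

theorem notMem_erdosUlamIdeal_iff (hf : ∀ n, 0 ≤ f n) (S : Set ℕ) :
    S ∉ ErdosUlamIdeal f ↔ ∃ q > 0, ∃ᶠ n in atTop, q ≤ density f S n := by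
  have hmem : S ∈ ErdosUlamIdeal f ↔ ∀ q > 0, ∀ᶠ n in atTop, density f S n < q := by
    rw [mem_erdosUlamIdeal_iff, tendsto_order]
    refine and_iff_right_of_imp fun _ q hq => Eventually.of_forall fun n => ?_
    exact hq.trans_le (density_nonneg hf S n)
  simp only [hmem, not_forall, not_eventually, not_lt, exists_prop]

theorem frequently_le_density_of_eventually_subset (hf : ∀ n, 0 ≤ f n) (hdiv : ¬ Summable f)
    {S T : Set ℕ} (hST : ∀ᶠ i in atTop, i ∈ S → i ∈ T) {q q' : ℝ} (hq : q' < q)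
    (hS : ∃ᶠ n in atTop, q ≤ density f S n) : ∃ᶠ n in atTop, q' ≤ density f T n := by
  obtain ⟨p, hp⟩ := eventually_atTop.1 hST
  have hsmall : ∀ᶠ n in atTop, weight f p / weight f n < q - q' :=
    (tendsto_weight_div_weight hf hdiv p).eventually_lt_const (sub_pos.2 hq)
  refine (hS.and_eventually (hsmall.and (eventually_ge_atTop p))).mono ?_
  rintro n ⟨hqS, hn, hpn⟩
  have := density_le_add hf hpn fun i hi _ => hp i hi.le
  linarith

theorem exists_notMem_forall_eventually_subset (hf : ∀ n, 0 ≤ f n) (hdiv : ¬ Summable f)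
    {T : ℕ → Set ℕ} (hT : Antitone T) {q : ℝ} (hq : 0 < q)
    (hTq : ∀ j, ∃ᶠ n in atTop, q ≤ density f (T j) n) :
    ∃ A : Set ℕ, A ∉ ErdosUlamIdeal f ∧ ∀ j, ∀ᶠ i in atTop, i ∈ A → i ∈ T j := by
  have hnext : ∀ j p : ℕ,
      ∃ m, p < m ∧ q ≤ density f (T j) m ∧ weight f p / weight f m ≤ q / 2 := by
    intro j p
    obtain ⟨m, hqm, hpm, hm⟩ := ((hTq j).and_eventually ((eventually_gt_atTop p).and
      ((tendsto_weight_div_weight hf hdiv p).eventually_le_const (half_pos hq)))).exists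
    exact ⟨m, hpm, hqm, hm⟩
  choose next hlt hdens hweight using hnext
  let n : ℕ → ℕ := fun j => Nat.rec 0 (fun j p => next j p) j
  have hn : StrictMono n := strictMono_nat_of_lt_succ fun j => hlt j (n j)
  let A : Set ℕ := {i | ∃ j, i ∈ T j ∧ n j < i ∧ i ≤ n (j + 1)}
  refine ⟨A, (notMem_erdosUlamIdeal_iff hf A).2 ⟨q / 2, half_pos hq, ?_⟩, fun j => ?_⟩
  · refine frequently_atTop.2 fun N => ⟨n (N + 1), hn.le_apply.trans (hn.monotone N.le_succ), ?_⟩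
    have := density_le_add hf (hlt N (n N)).le (T := A) fun i h₁ h₂ hi => ⟨N, hi, h₁, h₂⟩
    linarith [hdens N (n N), hweight N (n N)]
  · filter_upwards [eventually_gt_atTop (n j)] with i hi ⟨k, hik, _, hik'⟩
    have hjk : j ≤ k := by
      by_contra! hkj
      have : n (k + 1) ≤ n j := hn.monotone hkj
      omega
    exact hT hjk hik

section Metric

variable {X : Type*} [PseudoMetricSpace X]

def limitSet (f : ℕ → ℝ) (x : ℕ → X) (q : ℝ) : Set X :=
  {l | ∀ ε > 0, ∃ᶠ n in atTop, q ≤ density f (x ⁻¹' Metric.closedBall l ε) n}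

theorem isClosed_limitSet (hf : ∀ n, 0 ≤ f n) (x : ℕ → X) (q : ℝ) :
    IsClosed (limitSet f x q) := by
  refine isClosed_of_closure_subset fun l hl ε hε => ?_
  obtain ⟨l', hl', hll'⟩ := Metric.mem_closure_iff.1 hl (ε / 2) (half_pos hε)
  have hball : Metric.closedBall l' (ε / 2) ⊆ Metric.closedBall l ε :=
    Metric.closedBall_subset_closedBall' (by rw [dist_comm]; linarith)
  exact (hl' (ε / 2) (half_pos hε)).mono fun n hn =>
    hn.trans (density_mono hf (preimage_mono hball) n)

theorem limitSet_anti (x : ℕ → X) {q q' : ℝ} (hqq' : q ≤ q') :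
    limitSet f x q' ⊆ limitSet f x q :=
  fun _ hl ε hε => (hl ε hε).mono fun _ hn => hqq'.trans hn

theorem exists_mem_limitSet (hf : ∀ n, 0 ≤ f n) (hdiv : ¬ Summable f) {x : ℕ → X} {l : X}
    (hl : l ∈ idealLimitPoints (ErdosUlamIdeal f) x) : ∃ q > 0, l ∈ limitSet f x q := by
  obtain ⟨A, hA, hconv⟩ := hl
  obtain ⟨q, hq, hAq⟩ := (notMem_erdosUlamIdeal_iff hf A).1 hA
  refine ⟨q / 2, half_pos hq, fun ε hε => ?_⟩
  have hball := eventually_inf_principal.1 (hconv (Metric.closedBall_mem_nhds l hε))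
  exact frequently_le_density_of_eventually_subset hf hdiv hball (half_lt_self hq) hAq

theorem mem_idealLimitPoints_of_mem_limitSet (hf : ∀ n, 0 ≤ f n) (hdiv : ¬ Summable f)
    {x : ℕ → X} {l : X} {q : ℝ} (hq : 0 < q) (hl : l ∈ limitSet f x q) :
    l ∈ idealLimitPoints (ErdosUlamIdeal f) x := by
  let T : ℕ → Set ℕ := fun j => x ⁻¹' Metric.closedBall l (1 / (j + 1))
  have hT : Antitone T := fun j k hjk =>
    preimage_mono (Metric.closedBall_subset_closedBall (Nat.one_div_le_one_div hjk))
  obtain ⟨A, hA, hAT⟩ := exists_notMem_forall_eventually_subset hf hdiv hT hq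
    fun j => hl _ Nat.one_div_pos_of_nat
  refine ⟨A, hA, Metric.tendsto_nhds.2 fun ε hε => ?_⟩
  obtain ⟨j, hj⟩ := exists_nat_one_div_lt hε
  exact eventually_inf_principal.2 <| (hAT j).mono fun i hi hiA => (hi hiA).trans_lt hj

end Metric

end ErdosUlam

open ErdosUlam

theorem stmt15_general {X : Type*} [MetricSpace X] (f : ℕ → ℝ) (hpos : ∀ n, 0 < f n)
    (hdiv : ¬ Summable f) (x : ℕ → X) :
    ∃ F : ℕ → Set X, (∀ n, IsClosed (F n)) ∧
      idealLimitPoints (ErdosUlamIdeal f) x = ⋃ n, F n := by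
  have hf : ∀ n, 0 ≤ f n := fun n => (hpos n).le
  refine ⟨fun k => limitSet f x (1 / (k + 1)), fun k => isClosed_limitSet hf x _, ?_⟩
  ext l
  simp only [mem_iUnion]
  constructor
  · intro hl
    obtain ⟨q, hq, hlq⟩ := exists_mem_limitSet hf hdiv hl
    obtain ⟨k, hk⟩ := exists_nat_one_div_lt hq
    exact ⟨k, limitSet_anti x hk.le hlq⟩
  · rintro ⟨k, hk⟩
    exact mem_idealLimitPoints_of_mem_limitSet hf hdiv Nat.one_div_pos_of_nat hk

/-- For an eventually non-increasing `f : ℕ → (0,∞)` with divergent sum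
and a sequence `x` in a metric space, the set `Λ_x(E_f)` of `E_f`-limit points is an
`F_σ`-set. -/
theorem stmt15 {X : Type*} [MetricSpace X] (f : ℕ → ℝ) (hpos : ∀ n, 0 < f n)
    (hmono : ∃ N : ℕ, ∀ m n : ℕ, N ≤ m → m ≤ n → f n ≤ f m)
    (hdiv : ¬ Summable f) (x : ℕ → X) :
    ∃ F : ℕ → Set X, (∀ n, IsClosed (F n)) ∧
      idealLimitPoints (ErdosUlamIdeal f) x = ⋃ n, F n :=
  stmt15_general f hpos hdiv x
end
end
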